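/- arXiv:2605.20586 — 6 statements merged into one kernel-verified Lean document; each statement's English description precedes it below -/
import Mathlib

section
/- If π : E ⥤ B is a Conduché fibration between small categories, then ternary factorizations lift essentially uniquely: for every morphism f : e₀ ⟶ e₃ of E and every factorization π f = h₁ ≫ h₂ ≫ h₃ in B, the category of ternary factorizations of f lifting (h₁, h₂, h₃) is connected, where the objects are triples (f₁ : e₀ ⟶ e₁, f₂ : e₁ ⟶ e₂, f₃ : e₂ ⟶ e₃) with f₁ ≫ f₂ ≫ f₃ = f and π fᵢ = hᵢ for i = 1, 2, 3, and a morphism (f₁, f₂, f₃) ⟶ (f₁', f₂', f₃') consists of morphisms k₁ : e₁ ⟶ e₁' and k₂ : e₂ ⟶ e₂' with π k₁ and π k₂ identities, f₁ ≫ k₁ = f₁', f₂ ≫ k₂ = k₁ ≫ f₂', and k₂ ≫ f₃' = f₃. -/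
/-!
STATEMENT 1: if `π : E ⥤ B` is a Conduché fibration, then ternary factorizations lift
essentially uniquely (the category of ternary factorization lifts is connected).
-/

universe u

open CategoryTheory

variable {E B : Type u} [SmallCategory E] [SmallCategory B]

/-- The category of factorizations of `f : e₁ ⟶ e₃` lifting a binary factorization
`(g₁, g₂)` of `π.map f`. -/
structure ConducheFact (π : E ⥤ B) {e₁ e₃ : E} (f : e₁ ⟶ e₃) {b : B}
    (g₁ : π.obj e₁ ⟶ b) (g₂ : b ⟶ π.obj e₃) : Type u where
  mid : E
  f₁ : e₁ ⟶ mid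
  f₂ : mid ⟶ e₃
  fac : f₁ ≫ f₂ = f
  hmid : π.obj mid = b
  hf₁ : π.map f₁ = g₁ ≫ eqToHom hmid.symm
  hf₂ : π.map f₂ = eqToHom hmid ≫ g₂

instance (π : E ⥤ B) {e₁ e₃ : E} (f : e₁ ⟶ e₃) {b : B}
    (g₁ : π.obj e₁ ⟶ b) (g₂ : b ⟶ π.obj e₃) :
    Category (ConducheFact π f g₁ g₂) where
  Hom F G := { h : F.mid ⟶ G.mid //
      π.map h = eqToHom (F.hmid.trans G.hmid.symm) ∧
      F.f₁ ≫ h = G.f₁ ∧ h ≫ G.f₂ = F.f₂ }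
  id F := ⟨𝟙 F.mid, by simp⟩
  comp {F G H} u v := ⟨u.1 ≫ v.1, by
    obtain ⟨hu1, hu2, hu3⟩ := u.2
    obtain ⟨hv1, hv2, hv3⟩ := v.2
    refine ⟨?_, ?_, ?_⟩
    · rw [Functor.map_comp, hu1, hv1, eqToHom_trans]
    · rw [← Category.assoc, hu2, hv2]
    · rw [Category.assoc, hv3, hu3]⟩
  id_comp u := Subtype.ext (Category.id_comp u.1)
  comp_id u := Subtype.ext (Category.comp_id u.1)
  assoc u v w := Subtype.ext (Category.assoc u.1 v.1 w.1)

/-- A functor is a *Conduché fibration* if every binary factorization of the image of a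
morphism lifts essentially uniquely, i.e. the category of lifted factorizations is
connected. -/
def IsConducheFibration (π : E ⥤ B) : Prop :=
  ∀ ⦃e₁ e₃ : E⦄ (f : e₁ ⟶ e₃) ⦃b : B⦄ (g₁ : π.obj e₁ ⟶ b) (g₂ : b ⟶ π.obj e₃),
    π.map f = g₁ ≫ g₂ → IsConnected (ConducheFact π f g₁ g₂)

/-- The category of factorizations of `f : e₀ ⟶ e₃` lifting a ternary factorization
`(h₁, h₂, h₃)` of `π.map f`. -/
structure TernaryFact (π : E ⥤ B) {e₀ e₃ : E} (f : e₀ ⟶ e₃) {b₁ b₂ : B}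
    (h₁ : π.obj e₀ ⟶ b₁) (h₂ : b₁ ⟶ b₂) (h₃ : b₂ ⟶ π.obj e₃) : Type u where
  m₁ : E
  m₂ : E
  f₁ : e₀ ⟶ m₁
  f₂ : m₁ ⟶ m₂
  f₃ : m₂ ⟶ e₃
  fac : f₁ ≫ f₂ ≫ f₃ = f
  hm₁ : π.obj m₁ = b₁
  hm₂ : π.obj m₂ = b₂
  hf₁ : π.map f₁ = h₁ ≫ eqToHom hm₁.symm
  hf₂ : π.map f₂ = eqToHom hm₁ ≫ h₂ ≫ eqToHom hm₂.symm
  hf₃ : π.map f₃ = eqToHom hm₂ ≫ h₃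

instance (π : E ⥤ B) {e₀ e₃ : E} (f : e₀ ⟶ e₃) {b₁ b₂ : B}
    (h₁ : π.obj e₀ ⟶ b₁) (h₂ : b₁ ⟶ b₂) (h₃ : b₂ ⟶ π.obj e₃) :
    Category (TernaryFact π f h₁ h₂ h₃) where
  Hom F G := { k : (F.m₁ ⟶ G.m₁) × (F.m₂ ⟶ G.m₂) //
      π.map k.1 = eqToHom (F.hm₁.trans G.hm₁.symm) ∧
      π.map k.2 = eqToHom (F.hm₂.trans G.hm₂.symm) ∧
      F.f₁ ≫ k.1 = G.f₁ ∧ F.f₂ ≫ k.2 = k.1 ≫ G.f₂ ∧ k.2 ≫ G.f₃ = F.f₃ }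
  id F := ⟨(𝟙 F.m₁, 𝟙 F.m₂), by refine ⟨?_, ?_, ?_, ?_, ?_⟩ <;> simp⟩
  comp {F G H} u v := ⟨(u.1.1 ≫ v.1.1, u.1.2 ≫ v.1.2), by
    obtain ⟨hu1, hu2, hu3, hu4, hu5⟩ := u.2
    obtain ⟨hv1, hv2, hv3, hv4, hv5⟩ := v.2
    refine ⟨?_, ?_, ?_, ?_, ?_⟩
    · rw [Functor.map_comp, hu1, hv1, eqToHom_trans]
    · rw [Functor.map_comp, hu2, hv2, eqToHom_trans]
    · rw [← Category.assoc, hu3, hv3]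
    · rw [← Category.assoc, hu4, Category.assoc, hv4, ← Category.assoc]
    · rw [Category.assoc, hv5, hu5]⟩
  id_comp u := Subtype.ext (by simp)
  comp_id u := Subtype.ext (by simp)
  assoc u v w := Subtype.ext (by simp)

section Aux

variable (π : E ⥤ B) {e₀ e₃ : E} (f : e₀ ⟶ e₃) {b₁ b₂ : B}
    (h₁ : π.obj e₀ ⟶ b₁) (h₂ : b₁ ⟶ b₂) (h₃ : b₂ ⟶ π.obj e₃)

/-- Assemble a ternary factorization from a binary one plus a factorization of its
second leg. -/
def ternAux (C : ConducheFact π f h₁ (h₂ ≫ h₃))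
    (D : ConducheFact π C.f₂ (eqToHom C.hmid ≫ h₂) h₃) : TernaryFact π f h₁ h₂ h₃ where
  m₁ := C.mid
  m₂ := D.mid
  f₁ := C.f₁
  f₂ := D.f₁
  f₃ := D.f₂
  fac := by rw [D.fac, C.fac]
  hm₁ := C.hmid
  hm₂ := D.hmid
  hf₁ := C.hf₁
  hf₂ := by rw [D.hf₁, Category.assoc]
  hf₃ := D.hf₂

/-- `ternAux` as a functor in the second variable. -/
def ternFunctor (C : ConducheFact π f h₁ (h₂ ≫ h₃)) :
    ConducheFact π C.f₂ (eqToHom C.hmid ≫ h₂) h₃ ⥤ TernaryFact π f h₁ h₂ h₃ where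
  obj D := ternAux π f h₁ h₂ h₃ C D
  map {D D'} u := ⟨(𝟙 C.mid, u.1), by
    obtain ⟨hu1, hu2, hu3⟩ := u.2
    exact ⟨by simp [ternAux]; rfl, hu1, by simp [ternAux], by simp [ternAux, hu2],
      by simpa [ternAux] using hu3⟩⟩
  map_id D := rfl
  map_comp u v := Subtype.ext (congrArg₂ Prod.mk (Category.id_comp (𝟙 C.mid)).symm rfl)

theorem hfib (C : ConducheFact π f h₁ (h₂ ≫ h₃)) :
    π.map C.f₂ = (eqToHom C.hmid ≫ h₂) ≫ h₃ := by rw [C.hf₂, Category.assoc]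

theorem tern_surj (F : TernaryFact π f h₁ h₂ h₃) :
    ∃ (C : ConducheFact π f h₁ (h₂ ≫ h₃))
      (D : ConducheFact π C.f₂ (eqToHom C.hmid ≫ h₂) h₃),
      ternAux π f h₁ h₂ h₃ C D = F := by
  exact ⟨⟨F.m₁, F.f₁, F.f₂ ≫ F.f₃, by rw [F.fac], F.hm₁, F.hf₁,
      by rw [π.map_comp, F.hf₂, F.hf₃]; simp⟩,
    ⟨F.m₂, F.f₂, F.f₃, rfl, F.hm₂, F.hf₂.trans (Category.assoc _ _ _).symm, F.hf₃⟩, rfl⟩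

theorem fiber_zigzag (hπ : IsConducheFibration π) (C : ConducheFact π f h₁ (h₂ ≫ h₃))
    (D D' : ConducheFact π C.f₂ (eqToHom C.hmid ≫ h₂) h₃) :
    Zigzag (ternAux π f h₁ h₂ h₃ C D) (ternAux π f h₁ h₂ h₃ C D') := by
  have : IsConnected (ConducheFact π C.f₂ (eqToHom C.hmid ≫ h₂) h₃) :=
    hπ C.f₂ _ _ (hfib π f h₁ h₂ h₃ C)
  exact zigzag_obj_of_zigzag (ternFunctor π f h₁ h₂ h₃ C) (isPreconnected_zigzag D D')

theorem step_zag (hπ : IsConducheFibration π) {C C' : ConducheFact π f h₁ (h₂ ≫ h₃)}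
    (u : Zag C C') (D : ConducheFact π C.f₂ (eqToHom C.hmid ≫ h₂) h₃) :
    ∃ D', Zigzag (ternAux π f h₁ h₂ h₃ C D) (ternAux π f h₁ h₂ h₃ C' D') := by
  have u' : Nonempty (C ⟶ C') ∨ Nonempty (C' ⟶ C) := u
  rcases u' with hu | hu
  · -- forward morphism u : C ⟶ C'
    obtain ⟨u⟩ := hu
    have : IsConnected (ConducheFact π C'.f₂ (eqToHom C'.hmid ≫ h₂) h₃) :=
      hπ C'.f₂ _ _ (hfib π f h₁ h₂ h₃ C')
    obtain ⟨D'⟩ : Nonempty (ConducheFact π C'.f₂ (eqToHom C'.hmid ≫ h₂) h₃) :=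
      IsConnected.is_nonempty
    obtain ⟨hu1, hu2, hu3⟩ := u.2
    refine ⟨D', (fiber_zigzag π f h₁ h₂ h₃ hπ C D
      ⟨D'.mid, u.1 ≫ D'.f₁, D'.f₂, by rw [Category.assoc, D'.fac, hu3], D'.hmid,
        by rw [π.map_comp, hu1, D'.hf₁]; simp, D'.hf₂⟩).trans (Zigzag.of_hom ?_)⟩
    exact ⟨(u.1, 𝟙 D'.mid), hu1, by simp [ternAux]; rfl, hu2, by simp [ternAux],
      by simp [ternAux]⟩
  · -- backward morphism u : C' ⟶ C
    obtain ⟨u⟩ := hu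
    obtain ⟨hu1, hu2, hu3⟩ := u.2
    refine ⟨⟨D.mid, u.1 ≫ D.f₁, D.f₂, by rw [Category.assoc, D.fac, hu3], D.hmid,
        by rw [π.map_comp, hu1, D.hf₁]; simp, D.hf₂⟩, (Zigzag.of_hom ?_).symm⟩
    exact ⟨(u.1, 𝟙 D.mid), hu1, by simp [ternAux]; rfl, hu2, by simp [ternAux],
      by simp [ternAux]⟩

end Aux

/-- If `π` is a Conduché fibration, ternary factorizations lift essentially uniquely. -/
theorem ternary_factorization_lifts_of_isConducheFibration
    (π : E ⥤ B) (hπ : IsConducheFibration π)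
    {e₀ e₃ : E} (f : e₀ ⟶ e₃) {b₁ b₂ : B}
    (h₁ : π.obj e₀ ⟶ b₁) (h₂ : b₁ ⟶ b₂) (h₃ : b₂ ⟶ π.obj e₃)
    (hfac : π.map f = h₁ ≫ h₂ ≫ h₃) :
    IsConnected (TernaryFact π f h₁ h₂ h₃) := by
  have hbase : IsConnected (ConducheFact π f h₁ (h₂ ≫ h₃)) := hπ f h₁ (h₂ ≫ h₃) hfac
  obtain ⟨C₀⟩ : Nonempty (ConducheFact π f h₁ (h₂ ≫ h₃)) := IsConnected.is_nonempty
  have : IsConnected (ConducheFact π C₀.f₂ (eqToHom C₀.hmid ≫ h₂) h₃) :=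
    hπ C₀.f₂ _ _ (hfib π f h₁ h₂ h₃ C₀)
  obtain ⟨D₀⟩ : Nonempty (ConducheFact π C₀.f₂ (eqToHom C₀.hmid ≫ h₂) h₃) :=
    IsConnected.is_nonempty
  have hne : Nonempty (TernaryFact π f h₁ h₂ h₃) := ⟨ternAux π f h₁ h₂ h₃ C₀ D₀⟩
  apply zigzag_isConnected
  intro F G
  obtain ⟨CF, DF, rfl⟩ := tern_surj π f h₁ h₂ h₃ F
  obtain ⟨CG, DG, rfl⟩ := tern_surj π f h₁ h₂ h₃ G
  have hz : Zigzag CF CG := isPreconnected_zigzag CF CG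
  have key : ∀ C' : ConducheFact π f h₁ (h₂ ≫ h₃), Zigzag CF C' →
      ∃ D', Zigzag (ternAux π f h₁ h₂ h₃ CF DF) (ternAux π f h₁ h₂ h₃ C' D') := by
    intro C' hz'
    induction hz' with
    | refl => exact ⟨DF, Zigzag.refl _⟩
    | tail _ z ih =>
      obtain ⟨D₁, hzz⟩ := ih
      obtain ⟨D₂, hzz2⟩ := step_zag π f h₁ h₂ h₃ hπ z D₁
      exact ⟨D₂, hzz.trans hzz2⟩
  obtain ⟨D', hD'⟩ := key CG hz
  exact hD'.trans (fiber_zigzag π f h₁ h₂ h₃ hπ CG D' DG)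
end

section
/- Exponentials via a universal example (Townsend, generalized): Let C be a category with finite limits and suppose there exists an object u of C such that for every object x of C there exist an exponentiable object e of C and a regular monomorphism from x into the exponential u^e (which exists since e is exponentiable). Then an object x of C is exponentiable if and only if the exponential u^x exists, i.e. the presheaf on C sending an object y to the set of morphisms y ⨯ x ⟶ u is representable. -/
/-!
STATEMENT 2 (Townsend, Proposition 5.13): in a finitely complete category `C`, if there
is an object `u` such that every object embeds by a regular monomorphism into an
exponential `u^e` with `e` exponentiable, then an object `x` is exponentiable iff the
exponential `u^x` exists, i.e. the presheaf `y ↦ (y ⨯ x ⟶ u)` is representable.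
-/

universe v u

open CategoryTheory CategoryTheory.Limits

namespace TownsendAux

variable {C : Type u} [Category.{v} C] [HasFiniteLimits C]

/-- The presheaf `z ↦ (z ⨯ x ⟶ w)`. -/
noncomputable abbrev P (x w : C) : Cᵒᵖ ⥤ Type v :=
  (prod.functor.flip.obj x).op ⋙ yoneda.obj w

lemma P_map {x w : C} {z z' : C} (f : z' ⟶ z) (g : (P x w).obj (Opposite.op z)) :
    (P x w).map f.op g = prod.map f (𝟙 x) ≫ g := rfl

/-- The symmetry morphism `(z ⨯ x) ⨯ e ⟶ (z ⨯ e) ⨯ x`. -/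
noncomputable def σ (z x e : C) : (z ⨯ x) ⨯ e ⟶ (z ⨯ e) ⨯ x :=
  prod.lift (prod.lift (prod.fst ≫ prod.fst) prod.snd) (prod.fst ≫ prod.snd)

@[simp] lemma σ_σ (z x e : C) : σ z x e ≫ σ z e x = 𝟙 _ := by
  ext <;> simp only [σ, Category.assoc, prod.lift_fst, prod.lift_snd, prod.lift_fst_assoc,
    prod.lift_snd_assoc, Category.id_comp]

/-- The symmetry iso. -/
noncomputable def σIso (z x e : C) : (z ⨯ x) ⨯ e ≅ (z ⨯ e) ⨯ x where
  hom := σ z x e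
  inv := σ z e x

lemma σ_natural {z z' : C} (f : z' ⟶ z) (x e : C) :
    prod.map (prod.map f (𝟙 x)) (𝟙 e) ≫ σ z x e
      = σ z' x e ≫ prod.map (prod.map f (𝟙 e)) (𝟙 x) := by
  ext <;> simp [σ]

/-- If `U` represents `z ↦ (z ⨯ x ⟶ u')` and `(-) ⨯ e ⊣ R`, then `R U` represents
`z ↦ (z ⨯ x ⟶ R u')`. -/
noncomputable def repR {x u' U : C} (rU : (P x u').RepresentableBy U)
    {e : C} {R : C ⥤ C} (adj : prod.functor.flip.obj e ⊣ R) :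
    (P x (R.obj u')).RepresentableBy (R.obj U) where
  homEquiv {z} :=
    ((adj.homEquiv z U).symm.trans
      ((rU.homEquiv (X := z ⨯ e)).trans
        (((σIso z x e).homCongr (Iso.refl u')).symm.trans
          (adj.homEquiv (z ⨯ x) u'))))
  homEquiv_comp {z z'} f g := by
    erw [Equiv.trans_apply, Equiv.trans_apply, Equiv.trans_apply, Equiv.trans_apply,
      Equiv.trans_apply, Equiv.trans_apply]
    rw [P_map]
    have h1 : (adj.homEquiv z U).symm (f ≫ g)
        = prod.map f (𝟙 e) ≫ (adj.homEquiv z' U).symm g := by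
      rw [adj.homEquiv_naturality_left_symm]; rfl
    erw [h1]
    have h2 : rU.homEquiv (prod.map f (𝟙 e) ≫ (adj.homEquiv z' U).symm g)
        = prod.map (prod.map f (𝟙 e)) (𝟙 x) ≫ rU.homEquiv ((adj.homEquiv z' U).symm g) := by
      exact rU.homEquiv_comp _ _
    erw [h2]
    have h3 : ∀ (k : (z' ⨯ e) ⨯ x ⟶ u'), ((σIso z x e).homCongr (Iso.refl u')).symm
          (prod.map (prod.map f (𝟙 e)) (𝟙 x) ≫ k)
        = prod.map (prod.map f (𝟙 x)) (𝟙 e)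
            ≫ ((σIso z' x e).homCongr (Iso.refl u')).symm k := by
      intro k
      simp only [Iso.homCongr_symm, Iso.homCongr_apply, Iso.refl_symm, Iso.refl_hom,
        Iso.symm_hom, Iso.symm_inv, Category.comp_id]
      rw [← Category.assoc, ← Category.assoc]
      congr 1
      exact (σ_natural f x e).symm
    erw [h3]
    have h4 : ∀ (k : (z' ⨯ x) ⨯ e ⟶ u'), adj.homEquiv (z ⨯ x) u'
          (prod.map (prod.map f (𝟙 x)) (𝟙 e) ≫ k)
        = prod.map f (𝟙 x) ≫ adj.homEquiv (z' ⨯ x) u' k := fun k =>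
      adj.homEquiv_naturality_left _ _
    exact h4 _

/-- Transporting a morphism along two representations. -/
noncomputable def transport {x w1 w2 A B : C} (r1 : (P x w1).RepresentableBy A)
    (r2 : (P x w2).RepresentableBy B) (α : w1 ⟶ w2) : A ⟶ B :=
  r2.homEquiv.symm (r1.homEquiv (𝟙 A) ≫ α)

lemma transport_spec {x w1 w2 A B : C} (r1 : (P x w1).RepresentableBy A)
    (r2 : (P x w2).RepresentableBy B) (α : w1 ⟶ w2) {z : C} (f : z ⟶ A) :
    r2.homEquiv (f ≫ transport r1 r2 α) = r1.homEquiv f ≫ α := by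
  rw [r2.homEquiv_comp, transport, Equiv.apply_symm_apply, P_map]
  erw [← Category.assoc]
  congr 1
  have h := (r1.homEquiv_comp f (𝟙 A)).symm
  rw [P_map] at h
  rw [h, Category.comp_id]

/-- If `y` is the equalizer of `α β : w1 ⟶ w2` and the presheaves of `w1`, `w2` are
representable, then the presheaf of `y` is representable by the corresponding equalizer. -/
noncomputable def repEq {x y w1 w2 A B : C} (r1 : (P x w1).RepresentableBy A)
    (r2 : (P x w2).RepresentableBy B) {α β : w1 ⟶ w2} {i : y ⟶ w1}
    {hw : i ≫ α = i ≫ β} (hlim : IsLimit (Fork.ofι i hw)) :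
    (P x y).RepresentableBy (equalizer (transport r1 r2 α) (transport r1 r2 β)) := by
  haveI : Mono i := mono_of_isLimit_fork hlim
  set αb := transport r1 r2 α with hαb
  set βb := transport r1 r2 β with hβb
  have fwd : ∀ {z : C} (f : z ⟶ equalizer αb βb),
      (r1.homEquiv (f ≫ equalizer.ι αb βb)) ≫ α
        = (r1.homEquiv (f ≫ equalizer.ι αb βb)) ≫ β := by
    intro z f
    rw [← transport_spec r1 r2 α (f ≫ equalizer.ι αb βb),
      ← transport_spec r1 r2 β (f ≫ equalizer.ι αb βb),
      Category.assoc, Category.assoc, ← hαb, ← hβb, equalizer.condition]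
  have bwd : ∀ {z : C} (g : z ⨯ x ⟶ y),
      (r1.homEquiv.symm (g ≫ i)) ≫ αb = (r1.homEquiv.symm (g ≫ i)) ≫ βb := by
    intro z g
    apply r2.homEquiv.injective
    rw [transport_spec, transport_spec, Equiv.apply_symm_apply,
      ]
    erw [Category.assoc, Category.assoc, hw]
  -- the forward map and its defining property
  let toFun : ∀ {z : C}, (z ⟶ equalizer αb βb) → ((z ⨯ x) ⟶ y) :=
    fun {z} f => (Fork.IsLimit.lift' hlim (r1.homEquiv (f ≫ equalizer.ι αb βb)) (fwd f)).1
  have toFun_i : ∀ {z : C} (f : z ⟶ equalizer αb βb),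
      toFun f ≫ i = r1.homEquiv (f ≫ equalizer.ι αb βb) :=
    fun {z} f => (Fork.IsLimit.lift' hlim (r1.homEquiv (f ≫ equalizer.ι αb βb)) (fwd f)).2
  refine
    { homEquiv := fun {z} =>
        { toFun := toFun
          invFun := fun g => equalizer.lift (r1.homEquiv.symm (g ≫ i)) (bwd g)
          left_inv := ?_
          right_inv := ?_ }
      homEquiv_comp := ?_ }
  · intro f
    apply equalizer.hom_ext
    rw [equalizer.lift_ι, Equiv.symm_apply_eq]
    exact toFun_i f
  · intro g
    apply (cancel_mono i).1
    refine (toFun_i _).trans ?_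
    rw [equalizer.lift_ι, Equiv.apply_symm_apply]
    rfl
  · intro z z' f g
    dsimp only [Equiv.coe_fn_mk]
    apply (cancel_mono i).1
    refine (toFun_i _).trans ?_
    have e1 : (P x y).map f.op (toFun g) ≫ i = prod.map f (𝟙 x) ≫ (toFun g ≫ i) := by
      rw [P_map]; exact Category.assoc _ _ _
    erw [e1, toFun_i g]
    have h := r1.homEquiv_comp f (g ≫ equalizer.ι αb βb)
    rw [P_map] at h
    rw [Category.assoc]
    exact h

end TownsendAux

open TownsendAux

theorem exponentiable_iff_exponential_of_universal_example
    {C : Type u} [Category.{v} C] [HasFiniteLimits C] (u' : C)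
    (h : ∀ x : C, ∃ (e : C) (R : C ⥤ C) (m : x ⟶ R.obj u'),
      Nonempty (prod.functor.flip.obj e ⊣ R) ∧ Nonempty (RegularMono m))
    (x : C) :
    (prod.functor.flip.obj x).IsLeftAdjoint ↔
      ((prod.functor.flip.obj x).op ⋙ yoneda.obj u').IsRepresentable := by
  constructor
  · rintro ⟨R, ⟨adj⟩⟩
    exact (adj.representableBy u').isRepresentable
  · intro hrep
    obtain ⟨U, ⟨rU⟩⟩ := hrep.has_representation
    have key : ∀ y : C, ∃ A : C, Nonempty ((P x y).RepresentableBy A) := by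
      intro y
      obtain ⟨e, R, m, ⟨adj⟩, ⟨rm⟩⟩ := h y
      obtain ⟨e', R', m', ⟨adj'⟩, ⟨rm'⟩⟩ := h rm.Z
      haveI : Mono m' := @RegularMono.mono _ _ _ _ _ rm'
      exact ⟨_, ⟨repEq (repR rU adj) (repR rU adj')
        (isEqualizerCompMono rm.isLimit m')⟩⟩
    choose G r using key
    have adj := Adjunction.adjunctionOfEquivRight
      (F := prod.functor.flip.obj x) (G_obj := G)
      (fun z y => ((r y).some.homEquiv (X := z)).symm)
      (by
        intro z' z y f g
        rw [Equiv.symm_apply_eq]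
        have hc : (r y).some.homEquiv (f ≫ (r y).some.homEquiv.symm g)
            = (prod.functor.flip.obj x).map f ≫ g := by
          have hcomp := (r y).some.homEquiv_comp f ((r y).some.homEquiv.symm g)
          rw [P_map] at hcomp
          rw [Equiv.apply_symm_apply] at hcomp
          exact hcomp
        exact hc.symm)
    exact adj.isLeftAdjoint
end

section
/- Equivalence (1)⟺(4) of Corollary 3.3: Let (C, S) be a small realized limit sketch and A a model of (C, S). Then the following are equivalent: (i) A is exponentiable in Mod(C), in the sense that for every model B the presheaf on Mod(C) sending a model M to the set of natural transformations M ⨯ A ⟶ B (binary products of models, computed as in the functor category C ⥤ Type, are again models) is representable by a model; (ii) for every model B of (C, S), the exponential B^A computed in the cartesian closed functor category C ⥤ Type is itself a model of (C, S). -/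
/-!
STATEMENT 3 (Corollary 3.3, (1)⟺(4)): for a realized small limit sketch `(C, S)` and a
model `A`, the following are equivalent: (i) for every model `B`, the presheaf on
`Mod(C)` sending a model `M` to the natural transformations `M ⨯ A ⟶ B` is
representable (by a model); (ii) for every model `B`, the exponential `B^A` computed in
the cartesian closed functor category `C ⥤ Type` is itself a model.
-/

universe u

open CategoryTheory CategoryTheory.Limits MonoidalCategory

/-- A cone datum of a limit sketch: a small diagram together with a cone over it. -/
structure SketchCone (C : Type u) [Category.{u} C] : Type (u + 1) where
  J : Type u
  [instJ : SmallCategory J]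
  D : J ⥤ C
  cone : Cone D

attribute [instance] SketchCone.instJ

/-- A functor `F : C ⥤ Type` is a *model* of the sketch `(C, S)` if it sends every cone
in `S` to a limit cone. -/
def IsModel {C : Type u} [Category.{u} C] (S : Set (SketchCone C)) (F : C ⥤ Type u) :
    Prop :=
  ∀ K ∈ S, Nonempty (IsLimit (F.mapCone K.cone))

/-- The presheaf on `Mod(C)` sending a model `M` to the set of natural transformations
`M ⨯ A ⟶ B` (the binary product being computed as in `C ⥤ Type`). -/
noncomputable def homProdPresheaf {C : Type u} [SmallCategory C]
    (S : Set (SketchCone C)) (A B : C ⥤ Type u) :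
    (ObjectProperty.FullSubcategory (IsModel S))ᵒᵖ ⥤ Type u :=
  (ObjectProperty.ι (IsModel S)).op ⋙ (tensorRight A).op ⋙ yoneda.obj B


section Aux

variable {C : Type u} [SmallCategory C]

/-- `IsModel` is invariant under natural isomorphism. -/
lemma isModel_of_iso (S : Set (SketchCone C)) {F G : C ⥤ Type u} (e : F ≅ G)
    (h : IsModel S F) : IsModel S G :=
  fun K hK => (h K hK).map fun l => IsLimit.mapConeEquiv e l

/-- For a realized sketch, every corepresentable functor is a model. -/
lemma coyoneda_isModel (S : Set (SketchCone C))
    (hreal : ∀ K ∈ S, Nonempty (IsLimit K.cone)) (c : C) :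
    IsModel S (coyoneda.obj (Opposite.op c)) :=
  fun K hK => (hreal K hK).map fun l => isLimitOfPreserves _ l

/-- The basic adjunction/braiding equivalence `(M ⟶ B^A) ≃ (M ⊗ A ⟶ B)`. -/
noncomputable def keyEquiv (A M B : C ⥤ Type u) :
    (M ⟶ (ihom A).obj B) ≃ (M ⊗ A ⟶ B) :=
  ((ihom.adjunction A).homEquiv M B).symm.trans ((β_ M A).symm.homCongr (Iso.refl B))

lemma keyEquiv_comp (A : C ⥤ Type u) {M M' B : C ⥤ Type u} (u : M ⟶ M')
    (g : M' ⟶ (ihom A).obj B) :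
    keyEquiv A M B (u ≫ g) = (u ▷ A) ≫ keyEquiv A M' B g := by
  dsimp [keyEquiv, Iso.homCongr]
  erw [Adjunction.homEquiv_naturality_left_symm]
  rw [show (tensorLeft A).map u = A ◁ u from rfl]
  simp only [Category.comp_id, ← Category.assoc, BraidedCategory.braiding_naturality_left]

/-- If `B^A` is a model, it represents the presheaf of maps out of products with `A`. -/
noncomputable def repBy (S : Set (SketchCone C)) (A B : C ⥤ Type u)
    (hE : IsModel S ((ihom A).obj B)) :
    (homProdPresheaf S A B).RepresentableBy
      (⟨(ihom A).obj B, hE⟩ : ObjectProperty.FullSubcategory (IsModel S)) where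
  homEquiv {M} := InducedCategory.homEquiv.trans (keyEquiv A M.obj B)
  homEquiv_comp {M M'} f g := keyEquiv_comp A f.hom g.hom

end Aux

theorem exponentiable_model_iff_exponential_isModel'
    {C : Type u} [SmallCategory C] (S : Set (SketchCone C))
    (hreal : ∀ K ∈ S, Nonempty (IsLimit K.cone))
    (A : C ⥤ Type u) (hA : IsModel S A) :
    (∀ Bm : ObjectProperty.FullSubcategory (IsModel S), (homProdPresheaf S A Bm.obj).IsRepresentable) ↔
      (∀ B : C ⥤ Type u, IsModel S B → IsModel S ((ihom A).obj B)) := by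
  constructor
  · intro hrep B hB
    obtain ⟨R, ⟨rep⟩⟩ := (hrep ⟨B, hB⟩).has_representation
    -- the natural equivalence `(M.obj ⟶ B^A) ≃ (M ⟶ R)` for models `M`
    let Phi : ∀ M : ObjectProperty.FullSubcategory (IsModel S),
        (M.obj ⟶ (ihom A).obj B) ≃ (M ⟶ R) :=
      fun M => (keyEquiv A M.obj B).trans rep.homEquiv.symm
    have Phinat : ∀ (M M' : ObjectProperty.FullSubcategory (IsModel S)) (u : M ⟶ M')
        (g : M'.obj ⟶ (ihom A).obj B),
        Phi M (u.hom ≫ g) = u ≫ Phi M' g := by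
      intro M M' u g
      apply rep.homEquiv.injective
      rw [rep.homEquiv_comp]
      refine (Equiv.apply_symm_apply rep.homEquiv _).trans ((keyEquiv_comp A u.hom g).trans ?_)
      exact congrArg (fun t => u.hom ▷ A ≫ t) (Equiv.apply_symm_apply rep.homEquiv _).symm
    -- the coyoneda models
    let Mc : C → ObjectProperty.FullSubcategory (IsModel S) :=
      fun c => ⟨coyoneda.obj (Opposite.op c), coyoneda_isModel S hreal c⟩
    -- the isomorphism `B^A ≅ R.obj`
    have e : (ihom A).obj B ≅ R.obj := by
      refine NatIso.ofComponents (fun c => Equiv.toIso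
        (coyonedaEquiv.symm.trans ((Phi (Mc c)).trans
          (InducedCategory.homEquiv.trans (coyonedaEquiv (F := R.obj)))))) ?_
      intro c c' f
      ext x
      show coyonedaEquiv ((Phi (Mc c') (coyonedaEquiv.symm (((ihom A).obj B).map f x)) :
        Mc c' ⟶ R).hom) = R.obj.map f (coyonedaEquiv (Phi (Mc c) (coyonedaEquiv.symm x)).hom)
      have h1 : (coyonedaEquiv.symm (((ihom A).obj B).map f x) :
          coyoneda.obj (Opposite.op c') ⟶ (ihom A).obj B) =
          coyoneda.map f.op ≫ coyonedaEquiv.symm x := by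
        apply coyonedaEquiv.injective
        rw [Equiv.apply_symm_apply, ← coyonedaEquiv_naturality, Equiv.apply_symm_apply]
      rw [h1]
      have h2 := Phinat (Mc c') (Mc c) (ObjectProperty.homMk (coyoneda.map f.op)) (coyonedaEquiv.symm x)
      rw [show coyoneda.map f.op ≫ coyonedaEquiv.symm x = (ObjectProperty.homMk (coyoneda.map f.op) : Mc c' ⟶ Mc c).hom ≫ coyonedaEquiv.symm x from rfl, h2]
      exact (coyonedaEquiv_naturality (Phi (Mc c) (coyonedaEquiv.symm x) : Mc c ⟶ R).hom f).symm
    exact isModel_of_iso S e.symm R.property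
  · intro hexp Bm
    exact (repBy S A Bm.obj (hexp Bm.obj Bm.property)).isRepresentable

/-- Corollary 3.3, (1)⟺(4), for a realized sketch. -/
theorem exponentiable_model_iff_exponential_isModel
    {C : Type u} [SmallCategory C] (S : Set (SketchCone C))
    (hreal : ∀ K ∈ S, Nonempty (IsLimit K.cone))
    (A : C ⥤ Type u) (hA : IsModel S A) :
    (∀ Bm : ObjectProperty.FullSubcategory (IsModel S), (homProdPresheaf S A Bm.obj).IsRepresentable) ↔
      (∀ B : C ⥤ Type u, IsModel S B → IsModel S ((ihom A).obj B)) :=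
  exponentiable_model_iff_exponential_isModel' S hreal A hA
end

section
/- Equivalence (1)⟺(3) of Corollary 3.3: Let (C, S) be a small limit sketch such that the inclusion Mod(C) ↪ (C ⥤ Type) admits a left adjoint L, and let A be a model. Then A is exponentiable in Mod(C) — the product functor (−) ⨯ A on Mod(C), with binary products of models computed as in C ⥤ Type, admits a right adjoint — if and only if for every model B there exists a model E together with bijections Hom_{Mod(C)}(L(C(c, −)) ⨯ A, B) ≅ Hom_{Mod(C)}(L(C(c, −)), E), natural in the object c of C, where C(c, −) denotes the corepresentable functor (the value of coyoneda at c). -/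
/-!
STATEMENT 4 (Corollary 3.3, (1)⟺(3)): for a small limit sketch `(C, S)` whose category
of models is reflective in `C ⥤ Type`, a model `A` is exponentiable in `Mod(C)` iff for
every model `B` there is a model `E` with bijections
`Hom(L(C(c,−)) ⨯ A, B) ≅ Hom(L(C(c,−)), E)` natural in `c : C`.
-/

universe u

open CategoryTheory CategoryTheory.Limits MonoidalCategory

section ClosureUnderProducts

variable {C : Type u} [SmallCategory C] {J : Type u} [SmallCategory J]
  {D : J ⥤ C} {F G : C ⥤ Type u}

/-- The first-projection cone used to show that models are closed under binary
products. -/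
@[simps]
def coneFst (s : Cone (D ⋙ (F ⊗ G))) : Cone (D ⋙ F) where
  pt := s.pt
  π :=
    { app := fun j => TypeCat.ofHom fun x => (s.π.app j x).1
      naturality := fun j j' f => by
        ext x; exact congrArg Prod.fst (ConcreteCategory.congr_hom (s.π.naturality f) x) }

/-- The second-projection cone used to show that models are closed under binary
products. -/
@[simps]
def coneSnd (s : Cone (D ⋙ (F ⊗ G))) : Cone (D ⋙ G) where
  pt := s.pt
  π :=
    { app := fun j => TypeCat.ofHom fun x => (s.π.app j x).2
      naturality := fun j j' f => by
        ext x; exact congrArg Prod.snd (ConcreteCategory.congr_hom (s.π.naturality f) x) }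

/-- Binary products (computed as in `C ⥤ Type`) of functors preserving the limit of a
cone again preserve it. -/
def isLimitMapConeTensor {c : Cone D}
    (hF : IsLimit (F.mapCone c)) (hG : IsLimit (G.mapCone c)) :
    IsLimit ((F ⊗ G).mapCone c) where
  lift s := TypeCat.ofHom fun x => (hF.lift (coneFst s) x, hG.lift (coneSnd s) x)
  fac s j := by
    refine ConcreteCategory.hom_ext _ _ fun x => ?_
    refine Prod.ext ?_ ?_
    · have h := ConcreteCategory.congr_hom (hF.fac (coneFst s) j) x
      first | exact h | simpa using h | (simp at h ⊢; exact h)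
    · have h := ConcreteCategory.congr_hom (hG.fac (coneSnd s) j) x
      first | exact h | simpa using h | (simp at h ⊢; exact h)
  uniq s m hm := by
    refine ConcreteCategory.hom_ext _ _ fun x => ?_
    refine Prod.ext ?_ ?_
    · have h := ConcreteCategory.congr_hom
        (hF.uniq (coneFst s) (TypeCat.ofHom fun y => (m y).1) fun j => by
          refine ConcreteCategory.hom_ext _ _ fun y => ?_
          have h' := congrArg Prod.fst (ConcreteCategory.congr_hom (hm j) y)
          first | exact h' | simpa using h' | (simp at h' ⊢; exact h')) x
      first | exact h | simpa using h | (simp at h ⊢; exact h)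
    · have h := ConcreteCategory.congr_hom
        (hG.uniq (coneSnd s) (TypeCat.ofHom fun y => (m y).2) fun j => by
          refine ConcreteCategory.hom_ext _ _ fun y => ?_
          have h' := congrArg Prod.snd (ConcreteCategory.congr_hom (hm j) y)
          first | exact h' | simpa using h' | (simp at h' ⊢; exact h')) x
      first | exact h | simpa using h | (simp at h ⊢; exact h)

/-- Binary products of models, computed as in `C ⥤ Type`, are again models. -/
theorem isModel_tensor {S : Set (SketchCone C)}
    (hF : IsModel S F) (hG : IsModel S G) : IsModel S (F ⊗ G) := fun K hK =>
  ⟨isLimitMapConeTensor (hF K hK).some (hG K hK).some⟩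

end ClosureUnderProducts

/-- The product functor `(−) ⨯ A` on `Mod(C)`, with binary products of models computed
as in `C ⥤ Type`. -/
noncomputable def modProd {C : Type u} [SmallCategory C] (S : Set (SketchCone C))
    (A : ObjectProperty.FullSubcategory (IsModel S)) :
    ObjectProperty.FullSubcategory (IsModel S) ⥤ ObjectProperty.FullSubcategory (IsModel S) :=
  ObjectProperty.lift _ (ObjectProperty.ι (IsModel S) ⋙ tensorRight A.obj)
    fun M => isModel_tensor M.property A.property

namespace Cor33

open Opposite

variable {C : Type u} [SmallCategory C] {S : Set (SketchCone C)}
variable (L : (C ⥤ Type u) ⥤ ObjectProperty.FullSubcategory (IsModel S))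
variable (adj : L ⊣ ObjectProperty.ι (IsModel S))

/-- The corepresentable functor `C(c, −)`. -/
abbrev Yc (c : C) : C ⥤ Type u := coyoneda.obj (op c)

/-- Extensionality for morphisms of models. -/
lemma modHom_ext {X Y : ObjectProperty.FullSubcategory (IsModel S)} {f g : X ⟶ Y}
    (h : ∀ (c : C) (x : X.obj.obj c), f.hom.app c x = g.hom.app c x) : f = g :=
  by ext c x; exact h c x

@[simp] lemma mcomp_app {X Y Z : ObjectProperty.FullSubcategory (IsModel S)} (f : X ⟶ Y) (g : Y ⟶ Z)
    (c : C) (x : X.obj.obj c) : (f ≫ g).hom.app c x = g.hom.app c (f.hom.app c x) := rfl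

/-- The generic point of `L (C(c,−))`. -/
noncomputable def gp (c : C) : (L.obj (Yc c)).obj.obj c :=
  (adj.unit.app (Yc c)).app c (𝟙 c)

/-- The classifying morphism `L(C(c,−)) ⟶ X` of an element `x : X(c)` of a model. -/
noncomputable def melt {X : ObjectProperty.FullSubcategory (IsModel S)} {c : C} (x : X.obj.obj c) :
    L.obj (Yc c) ⟶ X :=
  (adj.homEquiv _ X).symm (coyonedaEquiv.symm x)

lemma homEquiv_app {c : C} {M : ObjectProperty.FullSubcategory (IsModel S)} (w : L.obj (Yc c) ⟶ M)
    {d : C} (f : c ⟶ d) :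
    ((adj.homEquiv _ M) w).app d f = w.hom.app d ((adj.unit.app (Yc c)).app d f) := by
  rw [Adjunction.homEquiv_unit]
  rfl

lemma hom_ext {c : C} {M : ObjectProperty.FullSubcategory (IsModel S)} {w₁ w₂ : L.obj (Yc c) ⟶ M}
    (h : ∀ (d : C) (f : c ⟶ d),
      w₁.hom.app d ((adj.unit.app (Yc c)).app d f) = w₂.hom.app d ((adj.unit.app (Yc c)).app d f)) :
    w₁ = w₂ := by
  apply (adj.homEquiv _ M).injective
  ext d f
  show ((adj.homEquiv _ M) w₁).app d f = ((adj.homEquiv _ M) w₂).app d f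
  rw [homEquiv_app L adj, homEquiv_app L adj]
  exact h d f

lemma melt_eval {X : ObjectProperty.FullSubcategory (IsModel S)} {c : C} (x : X.obj.obj c) :
    (melt L adj x).hom.app c (gp L adj c) = x := by
  have h := (homEquiv_app L adj (melt L adj x) (𝟙 c)).symm
  rw [show (adj.homEquiv _ X) (melt L adj x) = coyonedaEquiv.symm x from
    (adj.homEquiv _ X).apply_symm_apply _] at h
  simpa [gp] using h

lemma melt_comp {X M : ObjectProperty.FullSubcategory (IsModel S)} (f : X ⟶ M) {c : C} (x : X.obj.obj c) :
    melt L adj (f.hom.app c x) = melt L adj x ≫ f := by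
  apply (adj.homEquiv _ M).injective
  rw [melt, Equiv.apply_symm_apply, Adjunction.homEquiv_naturality_right, melt,
    Equiv.apply_symm_apply, Equiv.symm_apply_eq, coyonedaEquiv_comp]
  simp [coyonedaEquiv_apply]

lemma unit_app_eq {c d : C} (f : c ⟶ d) :
    (adj.unit.app (Yc c)).app d f = (L.map (coyoneda.map f.op)).hom.app d (gp L adj d) := by
  have h := ConcreteCategory.congr_hom (NatTrans.congr_app (adj.unit.naturality (coyoneda.map f.op)) d) (𝟙 d)
  simpa [gp] using h

lemma melt_gp (c : C) : melt L adj (gp L adj c) = 𝟙 (L.obj (Yc c)) := by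
  apply (adj.homEquiv _ _).injective
  rw [melt, Equiv.apply_symm_apply, Equiv.symm_apply_eq]
  simp [gp, coyonedaEquiv_apply, Adjunction.homEquiv_unit]
  rfl

lemma melt_unit {c d : C} (f : c ⟶ d) :
    melt L adj ((adj.unit.app (Yc c)).app d f) = L.map (coyoneda.map f.op) := by
  rw [unit_app_eq L adj, melt_comp L adj, melt_gp, Category.id_comp]

lemma melt_map {X : ObjectProperty.FullSubcategory (IsModel S)} {c d : C} (g : c ⟶ d) (x : X.obj.obj c) :
    melt L adj (X.obj.map g x) = L.map (coyoneda.map g.op) ≫ melt L adj x := by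
  apply (adj.homEquiv _ _).injective
  rw [melt, Equiv.apply_symm_apply, Adjunction.homEquiv_naturality_left, melt,
    Equiv.apply_symm_apply]
  exact coyonedaEquiv_symm_map g x

lemma unit_gp {d d' : C} (g : d ⟶ d') :
    (adj.unit.app (Yc d)).app d' g = (L.obj (Yc d)).obj.map g (gp L adj d) := by
  have h := ConcreteCategory.congr_hom ((adj.unit.app (Yc d)).naturality g) (𝟙 d)
  simpa [gp] using h

lemma gp_naturality {d d' : C} (g : d ⟶ d') {M : ObjectProperty.FullSubcategory (IsModel S)}
    (w : L.obj (Yc d) ⟶ M) :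
    w.hom.app d' ((adj.unit.app (Yc d)).app d' g) = M.obj.map g (w.hom.app d (gp L adj d)) := by
  rw [unit_gp L adj]
  exact ConcreteCategory.congr_hom (w.hom.naturality g) (gp L adj d)

section Tau

variable (A : ObjectProperty.FullSubcategory (IsModel S)) {B E : ObjectProperty.FullSubcategory (IsModel S)}
variable (σ : (coyoneda ⋙ L ⋙ modProd S A).op ⋙ yoneda.obj B ≅
    (coyoneda ⋙ L).op ⋙ yoneda.obj E)

@[simp] lemma modProd_map_app {X Y : ObjectProperty.FullSubcategory (IsModel S)} (f : X ⟶ Y) (c : C)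
    (p : ((modProd S A).obj X).obj.obj c) :
    ((modProd S A).map f).hom.app c p = (f.hom.app c p.1, p.2) := rfl

/-- The bijection of the hypothesis, at the object `c`. -/
noncomputable def τ (c : C) :
    ((modProd S A).obj (L.obj (Yc c)) ⟶ B) ≃ (L.obj (Yc c) ⟶ E) :=
  (σ.app (op (op c))).toEquiv

lemma tau_natural {c d : C} (f : c ⟶ d) (p : (modProd S A).obj (L.obj (Yc c)) ⟶ B) :
    τ L A σ d ((modProd S A).map (L.map (coyoneda.map f.op)) ≫ p)
      = L.map (coyoneda.map f.op) ≫ τ L A σ c p := by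
  have h := ConcreteCategory.congr_hom (σ.hom.naturality f.op.op) p
  simp only [Functor.comp_obj, Functor.op_obj, Functor.comp_map, Functor.op_map,
    yoneda_obj_map, Quiver.Hom.unop_op, types_comp_apply] at h
  exact h

lemma tau_symm_natural {c d : C} (f : c ⟶ d) (v : L.obj (Yc c) ⟶ E) :
    (τ L A σ d).symm (L.map (coyoneda.map f.op) ≫ v)
      = (modProd S A).map (L.map (coyoneda.map f.op)) ≫ (τ L A σ c).symm v := by
  rw [Equiv.symm_apply_eq, tau_natural, Equiv.apply_symm_apply]

/-- First auxiliary transformation for the key lemma. -/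
noncomputable def lam1 {c : C} (v : L.obj (Yc c) ⟶ E) : (L.obj (Yc c)).obj ⟶ E.obj where
  app d := TypeCat.ofHom fun z =>
    (τ L A σ d ((modProd S A).map (melt L adj z) ≫ (τ L A σ c).symm v)).hom.app d
    (gp L adj d)
  naturality d d' g := by
    ext z
    show (τ L A σ d' ((modProd S A).map (melt L adj ((L.obj (Yc c)).obj.map g z)) ≫
        (τ L A σ c).symm v)).hom.app d' (gp L adj d') = E.obj.map g _
    rw [melt_map L adj, Functor.map_comp, Category.assoc, tau_natural, mcomp_app,
      ← unit_app_eq L adj, gp_naturality L adj]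
    rfl

/-- Second auxiliary transformation for the key lemma. -/
noncomputable def lam2 {c : C} (v : L.obj (Yc c) ⟶ E) : (L.obj (Yc c)).obj ⟶ E.obj where
  app d := TypeCat.ofHom fun z => (melt L adj z ≫ v).hom.app d (gp L adj d)
  naturality d d' g := by
    ext z
    show (melt L adj ((L.obj (Yc c)).obj.map g z) ≫ v).hom.app d' (gp L adj d')
      = E.obj.map g ((melt L adj z ≫ v).hom.app d (gp L adj d))
    rw [melt_map L adj, Category.assoc, mcomp_app, ← unit_app_eq L adj, gp_naturality L adj]

lemma lam1_eq_lam2 {c : C} (v : L.obj (Yc c) ⟶ E) :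
    lam1 L adj A σ v = lam2 L adj v := by
  refine congrArg InducedCategory.Hom.hom (hom_ext L adj (M := E)
    (w₁ := ObjectProperty.homMk (lam1 L adj A σ v)) (w₂ := ObjectProperty.homMk (lam2 L adj v)) ?_)
  intro d f
  show (τ L A σ d ((modProd S A).map (melt L adj ((adj.unit.app (Yc c)).app d f)) ≫
      (τ L A σ c).symm v)).hom.app d (gp L adj d)
    = (melt L adj ((adj.unit.app (Yc c)).app d f) ≫ v).hom.app d (gp L adj d)
  rw [melt_unit L adj, tau_natural, Equiv.apply_symm_apply]

lemma keyGP {c : C} (v : L.obj (Yc c) ⟶ E) {d : C} (ξ : L.obj (Yc d) ⟶ L.obj (Yc c)) :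
    (τ L A σ d ((modProd S A).map ξ ≫ (τ L A σ c).symm v)).hom.app d (gp L adj d)
      = (ξ ≫ v).hom.app d (gp L adj d) := by
  have h2 := ConcreteCategory.congr_hom (NatTrans.congr_app (lam1_eq_lam2 L adj A σ v) d)
    (ξ.hom.app d (gp L adj d))
  simp only [lam1, lam2, TypeCat.ofHom_apply] at h2
  rw [melt_comp L adj, melt_gp, Category.id_comp] at h2
  exact h2

include adj in
lemma key {e c : C} (ζ : L.obj (Yc e) ⟶ L.obj (Yc c)) (v : L.obj (Yc c) ⟶ E) :
    (modProd S A).map ζ ≫ (τ L A σ c).symm v = (τ L A σ e).symm (ζ ≫ v) := by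
  rw [Equiv.eq_symm_apply]
  apply hom_ext L adj
  intro d f
  rw [unit_app_eq L adj]
  have l : ∀ (M : ObjectProperty.FullSubcategory (IsModel S)) (w : L.obj (Yc e) ⟶ M),
      w.hom.app d ((L.map (coyoneda.map f.op)).hom.app d (gp L adj d))
        = (L.map (coyoneda.map f.op) ≫ w).hom.app d (gp L adj d) := fun M w => rfl
  rw [l _ _, l _ _, ← tau_natural, ← Category.assoc, ← Functor.map_comp,
    keyGP L adj A σ v (L.map (coyoneda.map f.op) ≫ ζ), Category.assoc]

/-- The forward map `Hom(X, E) → Hom(X ⨯ A, B)`. -/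
noncomputable def alphaHom {X : ObjectProperty.FullSubcategory (IsModel S)} (u : X ⟶ E) :
    (modProd S A).obj X ⟶ B where
  hom.app e := TypeCat.ofHom fun p => ((τ L A σ e).symm (melt L adj (u.hom.app e p.1))).hom.app e (gp L adj e, p.2)
  hom.naturality e e' g := by
    ext p
    show ((τ L A σ e').symm (melt L adj (u.hom.app e' (X.obj.map g p.1)))).hom.app e'
        (gp L adj e', A.obj.map g p.2)
      = B.obj.map g (((τ L A σ e).symm (melt L adj (u.hom.app e p.1))).hom.app e (gp L adj e, p.2))
    rw [show u.hom.app e' (X.obj.map g p.1) = E.obj.map g (u.hom.app e p.1) from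
      ConcreteCategory.congr_hom (u.hom.naturality g) p.1]
    rw [melt_map L adj, tau_symm_natural]
    erw [mcomp_app, modProd_map_app]
    rw [← unit_app_eq L adj,
      unit_gp L adj]
    exact ConcreteCategory.congr_hom (((τ L A σ e).symm (melt L adj (u.hom.app e p.1))).hom.naturality g)
      (show ((modProd S A).obj (L.obj (Yc e))).obj.obj e from (gp L adj e, p.2))

/-- The backward map `Hom(X ⨯ A, B) → Hom(X, E)`. -/
noncomputable def betaHom {X : ObjectProperty.FullSubcategory (IsModel S)} (h : (modProd S A).obj X ⟶ B) :
    X ⟶ E where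
  hom.app c := TypeCat.ofHom fun x => (τ L A σ c ((modProd S A).map (melt L adj x) ≫ h)).hom.app c (gp L adj c)
  hom.naturality c c' g := by
    ext x
    show (τ L A σ c' ((modProd S A).map (melt L adj (X.obj.map g x)) ≫ h)).hom.app c'
        (gp L adj c')
      = E.obj.map g ((τ L A σ c ((modProd S A).map (melt L adj x) ≫ h)).hom.app c (gp L adj c))
    rw [melt_map L adj, Functor.map_comp, Category.assoc, tau_natural, mcomp_app,
      ← unit_app_eq L adj, gp_naturality L adj]

include adj in
lemma star {X : ObjectProperty.FullSubcategory (IsModel S)} (u : X ⟶ E) {c : C} (ξ : L.obj (Yc c) ⟶ X) :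
    (modProd S A).map ξ ≫ alphaHom L adj A σ u = (τ L A σ c).symm (ξ ≫ u) := by
  apply modHom_ext
  intro d p
  rw [mcomp_app, modProd_map_app]
  show ((τ L A σ d).symm (melt L adj (u.hom.app d (ξ.hom.app d p.1)))).hom.app d (gp L adj d, p.2) = _
  rw [show u.hom.app d (ξ.hom.app d p.1) = (ξ ≫ u).hom.app d p.1 from rfl, melt_comp L adj,
    ← key L adj A σ]
  erw [mcomp_app, modProd_map_app]
  rw [melt_eval L adj]
  rfl

/-- The couple of mutually inverse maps giving the adjunction. -/
noncomputable def hequiv (X : ObjectProperty.FullSubcategory (IsModel S)) :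
    ((modProd S A).obj X ⟶ B) ≃ (X ⟶ E) where
  toFun := betaHom L adj A σ
  invFun := alphaHom L adj A σ
  left_inv h := by
    apply modHom_ext
    intro e p
    show ((τ L A σ e).symm (melt L adj ((betaHom L adj A σ h).hom.app e p.1))).hom.app e
      (gp L adj e, p.2) = h.hom.app e p
    rw [show (betaHom L adj A σ h).hom.app e p.1
        = (τ L A σ e ((modProd S A).map (melt L adj p.1) ≫ h)).hom.app e (gp L adj e) from rfl,
      melt_comp L adj, melt_gp, Category.id_comp, Equiv.symm_apply_apply]
    erw [mcomp_app, modProd_map_app]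
    rw [melt_eval L adj]
    rfl
  right_inv u := by
    apply modHom_ext
    intro c x
    show (τ L A σ c ((modProd S A).map (melt L adj x) ≫ alphaHom L adj A σ u)).hom.app c
      (gp L adj c) = u.hom.app c x
    rw [star L adj A σ, Equiv.apply_symm_apply, mcomp_app, melt_eval L adj]

include adj in
lemma beta_natural {X' X : ObjectProperty.FullSubcategory (IsModel S)} (f : X' ⟶ X)
    (h : (modProd S A).obj X ⟶ B) :
    betaHom L adj A σ ((modProd S A).map f ≫ h) = f ≫ betaHom L adj A σ h := by
  apply modHom_ext
  intro c x
  show (τ L A σ c ((modProd S A).map (melt L adj x) ≫ (modProd S A).map f ≫ h)).hom.app c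
      (gp L adj c)
    = (τ L A σ c ((modProd S A).map (melt L adj (f.hom.app c x)) ≫ h)).hom.app c (gp L adj c)
  rw [melt_comp L adj, Functor.map_comp, Category.assoc]

end Tau

end Cor33

/-- Corollary 3.3, (1)⟺(3). -/
theorem exponentiable_model_iff_representable_on_reflected_representables
    {C : Type u} [SmallCategory C] (S : Set (SketchCone C))
    (L : (C ⥤ Type u) ⥤ ObjectProperty.FullSubcategory (IsModel S))
    (adj : L ⊣ ObjectProperty.ι (IsModel S))
    (A : ObjectProperty.FullSubcategory (IsModel S)) :
    (modProd S A).IsLeftAdjoint ↔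
      ∀ B : ObjectProperty.FullSubcategory (IsModel S), ∃ E : ObjectProperty.FullSubcategory (IsModel S),
        Nonempty ((coyoneda ⋙ L ⋙ modProd S A).op ⋙ yoneda.obj B ≅
          (coyoneda ⋙ L).op ⋙ yoneda.obj E) := by
  constructor
  · rintro ⟨⟨R, ⟨adjR⟩⟩⟩ B
    refine ⟨R.obj B, ⟨NatIso.ofComponents (fun X => (adjR.homEquiv _ B).toIso) ?_⟩⟩
    intro X X' f
    ext p
    simp only [Functor.comp_obj, Functor.op_obj, Functor.comp_map, Functor.op_map,
      yoneda_obj_map, Quiver.Hom.unop_op, types_comp_apply, Equiv.toIso_hom]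
    exact adjR.homEquiv_naturality_left _ _
  · intro h
    choose Efun hE using h
    exact ⟨⟨Adjunction.rightAdjointOfEquiv
        (fun X B => Cor33.hequiv L adj A (hE B).some X)
        (fun X' X Y f g => Cor33.beta_natural L adj A (hE Y).some f g),
      ⟨Adjunction.adjunctionOfEquivRight _ _⟩⟩⟩
end

section
/- Slicing limit sketches (Proposition 3.4): Let (C, S) be a small limit sketch and X : C ⥤ Type a model of (C, S). Then the slice category Mod(C)/X — the full subcategory of the over category over X in C ⥤ Type spanned by those objects whose domain is a model — is equivalent to the category Mod(∫X, S̄) of models of the limit sketch whose underlying category is the category of elements ∫X of X and whose distinguished cones S̄ are exactly those cones in ∫X whose image under the canonical projection π : ∫X ⥤ C is a cone belonging to S. -/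
/-!
STATEMENT 6 (Proposition 3.4): for a model `X` of a small limit sketch `(C, S)`, the
slice `Mod(C)/X` is equivalent to the category of models of the induced sketch on the
category of elements `∫X`, whose distinguished cones are those projecting into `S`.
-/

universe u

open CategoryTheory CategoryTheory.Limits

/-- The image of a sketched cone under a functor. -/
def SketchCone.map {C : Type u} [Category.{u} C] {D : Type u} [Category.{u} D]
    (K : SketchCone C) (F : C ⥤ D) : SketchCone D :=
  ⟨K.J, K.D ⋙ F, F.mapCone K.cone⟩

namespace Statement6Aux

variable {C : Type u} [SmallCategory C] (X : C ⥤ Type u)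

/-- The fiber functor on the category of elements associated to an object of `Over X`. -/
@[simps]
def fiber (f : Over X) : X.Elements ⥤ Type u where
  obj p := { y : f.left.obj p.1 // f.hom.app p.1 y = p.2 }
  map {p q} u := ↾fun y => ⟨f.left.map u.1 y.1, by
    have h := NatTrans.naturality_apply f.hom u.1 y.1
    rw [h, y.2, u.2]⟩
  map_id p := by
    ext y
    show f.left.map (𝟙 p.1) y.1 = y.1
    simp
  map_comp {p q r} u v := by
    ext y
    show f.left.map (u.1 ≫ v.1) y.1 = f.left.map v.1 (f.left.map u.1 y.1)
    simp

/-- The functor `Over X ⥤ (∫X ⥤ Type)` sending a map into `X` to its fiber functor. -/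
@[simps]
def toFiber : Over X ⥤ (X.Elements ⥤ Type u) where
  obj f := fiber X f
  map {f g} w :=
    { app := fun p => ↾fun y => ⟨w.left.app p.1 y.1, by
        have h := types_congr_hom (NatTrans.congr_app (Over.w w) p.1) y.1
        dsimp at h
        rw [h, y.2]⟩
      naturality := fun p q u => by
        ext y
        apply Subtype.ext
        have hn := NatTrans.naturality_apply w.left u.1 y.1
        dsimp at hn ⊢
        exact hn }
  map_id f := by
    apply NatTrans.ext
    funext p
    ext y
    apply Subtype.ext
    rfl
  map_comp {f g h} w w' := by
    apply NatTrans.ext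
    funext p
    ext y
    apply Subtype.ext
    rfl

instance : (toFiber X).Faithful where
  map_injective {f g} w w' h := by
    apply CommaMorphism.ext
    · apply NatTrans.ext
      funext c
      ext y
      exact congrArg Subtype.val
        (types_congr_hom (congrFun (congrArg NatTrans.app h) ⟨c, f.hom.app c y⟩) ⟨y, rfl⟩)
    · apply Subsingleton.elim

instance : (toFiber X).Full where
  map_surjective {f g} τ := by
    have hnat : ∀ {c c' : C} (h : c ⟶ c') (y : f.left.obj c),
        X.map h (f.hom.app c y) = f.hom.app c' (f.left.map h y) := by
      intro c c' h y
      have := NatTrans.naturality_apply f.hom h y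
      exact this.symm
    refine ⟨Over.homMk
      { app := fun c => ↾fun y => (τ.app ⟨c, f.hom.app c y⟩ ⟨y, rfl⟩).1
        naturality := by
          intro c c' h
          ext y
          have key := types_congr_hom (τ.naturality
            ((⟨h, hnat h y⟩ : X.elementsMk c (f.hom.app c y) ⟶
              X.elementsMk c' (f.hom.app c' (f.left.map h y))))) ⟨y, rfl⟩
          have key' := congrArg Subtype.val key
          dsimp at key' ⊢
          exact key' }
      (by
        apply NatTrans.ext
        funext c
        ext y
        have h2 := (τ.app ⟨c, f.hom.app c y⟩ ⟨y, rfl⟩).2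
        dsimp at h2 ⊢
        exact h2), ?_⟩
    · apply NatTrans.ext
      funext p
      ext y
      obtain ⟨c, x⟩ := p
      obtain ⟨y, hy⟩ := y
      change f.left.obj c at y
      dsimp at hy ⊢
      change f.hom.app c y = x at hy
      subst hy
      rfl

/-- Auxiliary heterogeneous-equality lemma for maps of a functor on `∫X`. -/
theorem mapHext (G : X.Elements ⥤ Type u) {p : X.Elements} {c : C} {x x' : X.obj c}
    (u : p ⟶ (⟨c, x⟩ : X.Elements)) (u' : p ⟶ (⟨c, x'⟩ : X.Elements))
    (hu : u.1 = u'.1) (g : G.obj p) : HEq (G.map u g) (G.map u' g) := by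
  have h2 := u.2
  have h2' := u'.2
  dsimp at h2 h2'
  rw [← hu] at h2'
  have hx : x = x' := h2.symm.trans h2'
  subst hx
  rw [Subtype.ext hu]

/-- The total functor (Grothendieck construction) of a functor on `∫X`. -/
def total (G : X.Elements ⥤ Type u) : C ⥤ Type u where
  obj c := Σ x : X.obj c, G.obj ⟨c, x⟩
  map {c c'} h := ↾fun s =>
    ⟨X.map h s.1,
      G.map (show X.elementsMk c s.1 ⟶ X.elementsMk c' (X.map h s.1) from ⟨h, rfl⟩) s.2⟩
  map_id c := by
    refine ConcreteCategory.hom_ext _ _ fun s => ?_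
    show (⟨X.map (𝟙 c) s.1, _⟩ : Σ x : X.obj c, G.obj ⟨c, x⟩) = s
    refine Sigma.ext (show X.map (𝟙 c) s.1 = s.1 by simp) ?_
    show HEq
      (G.map (⟨𝟙 c, rfl⟩ : X.elementsMk c s.1 ⟶ X.elementsMk c (X.map (𝟙 c) s.1)) s.2) s.2
    refine HEq.trans (mapHext X G
      (⟨𝟙 c, rfl⟩ : X.elementsMk c s.1 ⟶ X.elementsMk c (X.map (𝟙 c) s.1))
      (𝟙 (X.elementsMk c s.1)) rfl s.2) ?_
    exact heq_of_eq (by simp)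
  map_comp {c c' c''} h h' := by
    refine ConcreteCategory.hom_ext _ _ fun s => ?_
    show (⟨X.map (h ≫ h') s.1, _⟩ : Σ x : X.obj c'', G.obj ⟨c'', x⟩) = ⟨X.map h' (X.map h s.1), _⟩
    refine Sigma.ext (show X.map (h ≫ h') s.1 = X.map h' (X.map h s.1) by simp) ?_
    show HEq
      (G.map (⟨h ≫ h', rfl⟩ : X.elementsMk c s.1 ⟶ X.elementsMk c'' (X.map (h ≫ h') s.1)) s.2)
      (G.map (⟨h', rfl⟩ : X.elementsMk c' (X.map h s.1) ⟶ X.elementsMk c'' (X.map h' (X.map h s.1)))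
        (G.map (⟨h, rfl⟩ : X.elementsMk c s.1 ⟶ X.elementsMk c' (X.map h s.1)) s.2))
    refine HEq.trans (mapHext X G
      (⟨h ≫ h', rfl⟩ : X.elementsMk c s.1 ⟶ X.elementsMk c'' (X.map (h ≫ h') s.1))
      ((⟨h, rfl⟩ : X.elementsMk c s.1 ⟶ X.elementsMk c' (X.map h s.1)) ≫
        (⟨h', rfl⟩ : X.elementsMk c' (X.map h s.1) ⟶ X.elementsMk c'' (X.map h' (X.map h s.1))))
      rfl s.2) ?_
    exact heq_of_eq (G.map_comp_apply _ _ _)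

/-- The total functor as an object of `Over X`. -/
def totalOver (G : X.Elements ⥤ Type u) : Over X :=
  Over.mk (Y := total X G) { app := fun c => ↾fun s => s.1, naturality := fun _ _ _ => rfl }

/-- Pointwise comparison of the fiber of the total functor with the original functor. -/
def fiberTotalEquiv (G : X.Elements ⥤ Type u) (c : C) (x : X.obj c) :
    {s : Σ x' : X.obj c, G.obj ⟨c, x'⟩ // s.1 = x} ≃ G.obj (X.elementsMk c x) where
  toFun s := G.map
    (⟨𝟙 c, by rw [FunctorToTypes.map_id_apply]; exact s.2⟩ :
      X.elementsMk c s.1.1 ⟶ X.elementsMk c x) s.1.2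
  invFun g := ⟨⟨x, g⟩, rfl⟩
  left_inv := by
    rintro ⟨⟨x', g⟩, hs⟩
    dsimp at hs
    subst hs
    apply Subtype.ext
    dsimp
    congr 1
    have h1 : (⟨𝟙 c, by rw [FunctorToTypes.map_id_apply]⟩ :
        X.elementsMk c x' ⟶ X.elementsMk c x') = 𝟙 (X.elementsMk c x') := Subtype.ext rfl
    rw [h1, FunctorToTypes.map_id_apply]
  right_inv := by
    intro g
    dsimp
    have h1 : (⟨𝟙 c, by rw [FunctorToTypes.map_id_apply]⟩ :
        X.elementsMk c x ⟶ X.elementsMk c x) = 𝟙 (X.elementsMk c x) := Subtype.ext rfl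
    rw [h1, FunctorToTypes.map_id_apply]

/-- The fiber of the total functor of `G` is isomorphic to `G`. -/
def fiberTotalIso (G : X.Elements ⥤ Type u) : fiber X (totalOver X G) ≅ G := by
  refine NatIso.ofComponents (fun p => Equiv.toIso (fiberTotalEquiv X G p.1 p.2)) ?_
  rintro ⟨cp, xp⟩ ⟨cq, xq⟩ u
  ext s
  obtain ⟨⟨x', g⟩, hs⟩ := s
  change X.obj cp at x'
  change G.obj ⟨cp, x'⟩ at g
  change x' = xp at hs
  subst hs
  show G.map _ (G.map _ g) = G.map u (G.map _ g)
  refine (G.map_comp_apply _ _ g).symm.trans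
    ((types_congr_hom (congrArg G.map (Subtype.ext ?_)) g).trans (G.map_comp_apply _ _ g))
  show u.1 ≫ 𝟙 cq = 𝟙 cp ≫ u.1
  simp

/-- Models are stable under natural isomorphism. -/
theorem isModel_of_iso {E : Type u} [Category.{u} E] {S' : Set (SketchCone E)}
    {F F' : E ⥤ Type u} (e : F ≅ F') (h : IsModel S' F) : IsModel S' F' :=
  fun K hK => ⟨IsLimit.mapConeEquiv e (h K hK).some⟩

/-- Lift of a sketched cone of `C` to the category of elements along compatible data. -/
def liftSketchCone (K : SketchCone C) (t : ∀ j, X.obj (K.D.obj j))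
    (ht : ∀ {j j'} (u : j ⟶ j'), X.map (K.D.map u) (t j) = t j')
    (x0 : X.obj K.cone.pt) (hx0 : ∀ j, X.map (K.cone.π.app j) x0 = t j) :
    SketchCone X.Elements :=
  ⟨K.J,
    { obj := fun j => ⟨K.D.obj j, t j⟩
      map := fun u => ⟨K.D.map u, ht u⟩
      map_id := fun j => Subtype.ext (K.D.map_id j)
      map_comp := fun u v => Subtype.ext (K.D.map_comp u v) },
    { pt := ⟨K.cone.pt, x0⟩
      π :=
        { app := fun j => ⟨K.cone.π.app j, hx0 j⟩
          naturality := fun j j' u => Subtype.ext (by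
            have := K.cone.π.naturality u
            dsimp at this ⊢
            exact this) } }⟩

theorem liftSketchCone_map (K : SketchCone C) (t : ∀ j, X.obj (K.D.obj j))
    (ht : ∀ {j j'} (u : j ⟶ j'), X.map (K.D.map u) (t j) = t j')
    (x0 : X.obj K.cone.pt) (hx0 : ∀ j, X.map (K.cone.π.app j) x0 = t j) :
    (liftSketchCone X K t ht x0 hx0).map (CategoryOfElements.π X) = K :=
  rfl

variable {S : Set (SketchCone C)}

/-- The key comparison: `f : F ⟶ X` is a model iff its fiber functor is a model of the
induced sketch on `∫X`. -/
theorem model_iff (hX : IsModel S X) (f : Over X) :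
    IsModel S f.left ↔
      IsModel {K : SketchCone X.Elements | K.map (CategoryOfElements.π X) ∈ S}
        ((toFiber X).obj f) := by
  constructor
  · intro hF K hK
    obtain ⟨hFK⟩ := hF _ hK
    obtain ⟨hXK⟩ := hX _ hK
    rw [Types.isLimit_iff]
    intro s hs
    have hs1 : (fun j => (s j).1) ∈ ((K.map (CategoryOfElements.π X)).D ⋙ f.left).sections :=
      fun {j j'} u => congrArg Subtype.val (hs u)
    obtain ⟨y, hy, hyuniq⟩ := (Types.isLimit_iff _).1 ⟨hFK⟩ _ hs1
    have hy2 : f.hom.app K.cone.pt.1 y = K.cone.pt.2 := by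
      have hsect : (fun j => (K.D.obj j).2) ∈
          ((K.map (CategoryOfElements.π X)).D ⋙ X).sections := fun {j j'} u => (K.D.map u).2
      obtain ⟨x', _, hx'uniq⟩ := (Types.isLimit_iff _).1 ⟨hXK⟩ _ hsect
      have h1 : f.hom.app K.cone.pt.1 y = x' := by
        refine hx'uniq _ fun j => ?_
        show X.map (K.cone.π.app j).1 (f.hom.app K.cone.pt.1 y) = (K.D.obj j).2
        have hn : f.hom.app (K.D.obj j).1 (f.left.map (K.cone.π.app j).1 y) =
            X.map (K.cone.π.app j).1 (f.hom.app K.cone.pt.1 y) :=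
          NatTrans.naturality_apply f.hom (K.cone.π.app j).1 y
        rw [← hn]
        have h4 : f.left.map (K.cone.π.app j).1 y = (s j).1 := hy j
        rw [h4]
        exact (s j).2
      have h2 : K.cone.pt.2 = x' := hx'uniq _ fun j => (K.cone.π.app j).2
      rw [h1, h2]
    refine ⟨⟨y, hy2⟩, fun j => Subtype.ext (hy j), fun z hz => Subtype.ext ?_⟩
    exact hyuniq z.1 fun j => congrArg Subtype.val (hz j)
  · intro hG K hK
    obtain ⟨hXK⟩ := hX K hK
    rw [Types.isLimit_iff]
    intro s hs
    have ht : (fun j => f.hom.app (K.D.obj j) (s j)) ∈ (K.D ⋙ X).sections := by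
      intro j j' u
      show X.map (K.D.map u) (f.hom.app (K.D.obj j) (s j)) = f.hom.app (K.D.obj j') (s j')
      have hn : f.hom.app (K.D.obj j') (f.left.map (K.D.map u) (s j)) =
          X.map (K.D.map u) (f.hom.app (K.D.obj j) (s j)) :=
        NatTrans.naturality_apply f.hom (K.D.map u) (s j)
      rw [← hn]
      have h4 : f.left.map (K.D.map u) (s j) = s j' := hs u
      rw [h4]
    obtain ⟨x0, hx0, hx0u⟩ := (Types.isLimit_iff _).1 ⟨hXK⟩ _ ht
    set K' : SketchCone X.Elements :=
      liftSketchCone X K (fun j => f.hom.app (K.D.obj j) (s j)) (fun u => ht u) x0 hx0 with hK'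
    have hK'mem : K' ∈ {K : SketchCone X.Elements | K.map (CategoryOfElements.π X) ∈ S} := by
      show K'.map (CategoryOfElements.π X) ∈ S
      rw [hK', liftSketchCone_map]
      exact hK
    obtain ⟨hGK⟩ := hG K' hK'mem
    have hsect : (fun j => (⟨s j, rfl⟩ : ((toFiber X).obj f).obj (K'.D.obj j))) ∈
        (K'.D ⋙ (toFiber X).obj f).sections := by
      intro j j' u
      apply Subtype.ext
      exact hs u
    obtain ⟨yy, hyy, hyyu⟩ := (Types.isLimit_iff _).1 ⟨hGK⟩ _ hsect
    refine ⟨yy.1, fun j => congrArg Subtype.val (hyy j), fun y' hy' => ?_⟩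
    have hφ : f.hom.app K.cone.pt y' = x0 := by
      refine hx0u _ fun j => ?_
      show X.map (K.cone.π.app j) (f.hom.app K.cone.pt y') = f.hom.app (K.D.obj j) (s j)
      have hn := NatTrans.naturality_apply f.hom (K.cone.π.app j) y'
      dsimp at hn
      rw [← hn]
      have h4 : f.left.map (K.cone.π.app j) y' = s j := hy' j
      rw [h4]
    have := hyyu ⟨y', hφ⟩ fun j => Subtype.ext (hy' j)
    exact congrArg Subtype.val this

end Statement6Aux

/-- Proposition 3.4: `Mod(C)/X ≃ Mod(∫X, S̄)`, where `S̄` consists of the cones of `∫X`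
whose projection to `C` lies in `S`. -/
theorem slice_of_models_equiv_models_of_elements
    {C : Type u} [SmallCategory C] (S : Set (SketchCone C))
    (X : C ⥤ Type u) (hX : IsModel S X) :
    Nonempty
      ((ObjectProperty.FullSubcategory fun f : Over X => IsModel S f.left) ≌
        ObjectProperty.FullSubcategory
          (IsModel {K : SketchCone X.Elements | K.map (CategoryOfElements.π X) ∈ S})) := by
  open Statement6Aux in
  let P := fun f : Over X => IsModel S f.left
  let Q := IsModel {K : SketchCone X.Elements | K.map (CategoryOfElements.π X) ∈ S}
  let Φ : ObjectProperty.FullSubcategory P ⥤ ObjectProperty.FullSubcategory Q :=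
    ObjectProperty.lift Q (ObjectProperty.ι P ⋙ toFiber X)
      (fun f => (model_iff X hX f.obj).1 f.property)
  have hfaith : Φ.Faithful := inferInstance
  have hfull : Φ.Full := inferInstance
  have hess : Φ.EssSurj := by
    constructor
    rintro ⟨G, hG⟩
    refine ⟨⟨totalOver X G,
      (model_iff X hX _).2 (isModel_of_iso (fiberTotalIso X G).symm hG)⟩,
      ⟨(ObjectProperty.ι Q).preimageIso (fiberTotalIso X G)⟩⟩
  have : Φ.IsEquivalence := { faithful := hfaith, full := hfull, essSurj := hess }
  exact ⟨Φ.asEquivalence⟩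
end

section
/- Structure of exponential semicategories (Proposition 3.8): Let A and B be small semicategories such that the exponential B^A exists in Semicat, i.e. there is a semicategory E together with bijections Hom_{Semicat}(X × A, B) ≅ Hom_{Semicat}(X, E) natural in the semicategory X. Then: (i) there is a bijection between the objects of E and the functions from the objects of A to the objects of B; (ii) under this bijection, for objects corresponding to functions F₁, F₂, there is a bijection between the morphisms F₁ ⟶ F₂ in E and the dependent functions assigning to every morphism f : a₁ ⟶ a₂ of A a morphism α_f : F₁(a₁) ⟶ F₂(a₂) of B (with no naturality condition); and (iii) under these bijections, for α : F₁ ⟶ F₂, β : F₂ ⟶ F₃ and γ : F₁ ⟶ F₃ in E, one has γ = α ≫ β if and only if γ_{f ≫ g} = α_f ≫ β_g for every composable pair of morphisms f, g in A. -/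
/-!
STATEMENT 9 (Proposition 3.8): structure of the exponential semicategory `B^A`,
assuming it exists (i.e. assuming bijections `Hom(X × A, B) ≅ Hom(X, E)` natural in `X`).
-/

universe v u

open CategoryTheory

/-- A *semicategory*: like a category, but without identity morphisms. -/
class Semicategory (obj : Type u) extends Quiver.{v} obj : Type max u (v + 1) where
  /-- composition of morphisms -/
  comp : ∀ {X Y Z : obj}, (X ⟶ Y) → (Y ⟶ Z) → (X ⟶ Z)
  /-- composition is associative -/
  assoc : ∀ {W X Y Z : obj} (f : W ⟶ X) (g : X ⟶ Y) (h : Y ⟶ Z),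
    comp (comp f g) h = comp f (comp g h)

/-- A *semifunctor* between semicategories. -/
structure Semifunctor (C : Type u) (D : Type u)
    [Semicategory.{v} C] [Semicategory.{v} D] where
  obj : C → D
  map : ∀ {X Y : C}, (X ⟶ Y) → (obj X ⟶ obj Y)
  map_comp : ∀ {X Y Z : C} (f : X ⟶ Y) (g : Y ⟶ Z),
    map (Semicategory.comp f g) = Semicategory.comp (map f) (map g)

/-- The category `Semicat` of small semicategories and semifunctors. -/
structure SemicatObj : Type (u + 1) where
  α : Type u
  str : Semicategory.{u} α

attribute [instance] SemicatObj.str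

instance : Category.{u} SemicatObj.{u} where
  Hom A B := Semifunctor A.α B.α
  id A := ⟨fun x => x, fun f => f, fun _ _ => rfl⟩
  comp F G := ⟨fun x => G.obj (F.obj x), fun f => G.map (F.map f), fun f g => by
    rw [F.map_comp, G.map_comp]⟩
  id_comp F := rfl
  comp_id F := rfl
  assoc F G H := rfl

/-- The componentwise product of two semicategories. -/
instance Semicategory.prod (C D : Type u) [Semicategory.{u} C] [Semicategory.{u} D] :
    Semicategory.{u} (C × D) where
  Hom p q := (p.1 ⟶ q.1) × (p.2 ⟶ q.2)
  comp f g := (Semicategory.comp f.1 g.1, Semicategory.comp f.2 g.2)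
  assoc f g h := by
    dsimp only
    rw [Semicategory.assoc, Semicategory.assoc]

/-- The functor `(−) × A` on `Semicat`, with products formed componentwise. -/
def prodWith (A : SemicatObj.{u}) : SemicatObj.{u} ⥤ SemicatObj.{u} where
  obj X := ⟨X.α × A.α, inferInstance⟩
  map {X Y} F :=
    { obj := fun p => (F.obj p.1, p.2)
      map := fun f => (F.map f.1, f.2)
      map_comp := fun f g => by
        show (F.map (Semicategory.comp f.1 g.1), Semicategory.comp f.2 g.2) = _
        rw [F.map_comp]
        rfl }
  map_id X := rfl
  map_comp F G := rfl

namespace Prop38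

open Opposite

/-! ### generic cast machinery for hom-types -/

def qcast {C : Type*} [Quiver C] {x x' y y' : C} (hx : x = x') (hy : y = y')
    (f : x ⟶ y) : x' ⟶ y' := hy ▸ hx ▸ f

@[simp] lemma qcast_refl {C : Type*} [Quiver C] {x y : C} (hx : x = x) (hy : y = y)
    (f : x ⟶ y) : qcast hx hy f = f := rfl

lemma qcast_heq {C : Type*} [Quiver C] {x x' y y' : C} (hx : x = x') (hy : y = y')
    (f : x ⟶ y) : HEq (qcast hx hy f) f := by subst hx; subst hy; rfl

lemma qcast_eq_iff {C : Type*} [Quiver C] {x x' y y' : C} (hx : x = x') (hy : y = y')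
    (f : x ⟶ y) (g : x' ⟶ y') : qcast hx hy f = g ↔ HEq f g := by
  subst hx; subst hy
  exact ⟨heq_of_eq, eq_of_heq⟩

lemma qcast_qcast {C : Type*} [Quiver C] {x x' x'' y y' y'' : C}
    (h1 : x = x') (h2 : y = y') (h3 : x' = x'') (h4 : y' = y'')
    (f : x ⟶ y) : qcast h3 h4 (qcast h1 h2 f) = qcast (h1.trans h3) (h2.trans h4) f := by
  subst h1; subst h2; subst h3; subst h4; rfl

lemma qcast_comp {C : Type u} [Semicategory.{u} C] {x y z x' y' z' : C}
    (hx : x = x') (hy hy' : y = y') (hz : z = z') (f : x ⟶ y) (g : y ⟶ z) :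
    Semicategory.comp (qcast hx hy f) (qcast hy' hz g) =
      qcast hx hz (Semicategory.comp f g) := by
  subst hx; subst hy; subst hz; rfl

/-! ### extensionality for semifunctors -/

lemma sfext {C D : Type u} [Semicategory.{u} C] [Semicategory.{u} D]
    {F G : Semifunctor C D} (hobj : F.obj = G.obj)
    (hmap : ∀ (X Y : C) (f : X ⟶ Y), HEq (F.map f) (G.map f)) : F = G := by
  obtain ⟨fo, fm, hf⟩ := F
  obtain ⟨go, gm, hg⟩ := G
  dsimp at hobj hmap
  subst hobj
  have : @fm = @gm := by
    funext X Y f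
    exact eq_of_heq (hmap X Y f)
  subst this
  rfl

lemma map_heq {C D : Type u} [Semicategory.{u} C] [Semicategory.{u} D]
    {F G : Semifunctor C D} (h : F = G) {X Y : C} (f : X ⟶ Y) :
    HEq (F.map f) (G.map f) := by subst h; rfl

/-! ### the chain semicategories -/

instance chainSemicat (n : ℕ) : Semicategory.{u} (ULift.{u} (Fin n)) where
  Hom x y := ULift.{u} (PLift (x.down < y.down))
  comp f g := ⟨⟨lt_trans f.down.down g.down.down⟩⟩
  assoc _ _ _ := rfl

abbrev chain (n : ℕ) : SemicatObj.{u} := ⟨ULift (Fin n), chainSemicat n⟩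

instance chainHomSubsingleton {n : ℕ} (x y : (chain.{u} n).α) : Subsingleton (x ⟶ y) :=
  inferInstanceAs (Subsingleton (ULift (PLift _)))

lemma chain_lt {n : ℕ} {X Y : (chain.{u} n).α} (f : X ⟶ Y) :
    X.down.val < Y.down.val := f.down.down

def chainHom {n : ℕ} (x y : (chain.{u} n).α) (h : x.down < y.down) : x ⟶ y := ⟨⟨h⟩⟩

def chain1_elim {x y : (chain.{u} 1).α} (f : x ⟶ y) {C : Sort*} : C :=
  absurd (chain_lt f) (by have := x.down.isLt; have := y.down.isLt; omega)

/-- a strictly monotone map of chains induces a semifunctor -/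
def chainMap {m n : ℕ} (φ : Fin m → Fin n) (hφ : ∀ {x y : Fin m}, x < y → φ x < φ y) :
    chain.{u} m ⟶ chain.{u} n where
  obj x := ⟨φ x.down⟩
  map f := ⟨⟨hφ f.down.down⟩⟩
  map_comp _ _ := Subsingleton.elim _ _


section
variable (A B E : SemicatObj.{u})
variable (iso : (prodWith A).op ⋙ yoneda.obj B ≅ yoneda.obj E)

/-- the bijection `Hom(X × A, B) ≃ Hom(X, E)` -/
def Phi (X : SemicatObj.{u}) : ((prodWith A).obj X ⟶ B) ≃ (X ⟶ E) :=
  (iso.app (op X)).toEquiv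

lemma Phi_nat {X Y : SemicatObj.{u}} (h : X ⟶ Y) (g : (prodWith A).obj Y ⟶ B) :
    Phi A B E iso X ((prodWith A).map h ≫ g) = h ≫ Phi A B E iso Y g := by
  have := ConcreteCategory.congr_hom (iso.hom.naturality h.op) g
  simpa [Phi] using this

def Psi (X : SemicatObj.{u}) : (X ⟶ E) ≃ ((prodWith A).obj X ⟶ B) :=
  (Phi A B E iso X).symm

lemma Psi_Phi (X : SemicatObj.{u}) (g : (prodWith A).obj X ⟶ B) :
    Psi A B E iso X (Phi A B E iso X g) = g :=
  (Phi A B E iso X).symm_apply_apply g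

lemma Phi_Psi (X : SemicatObj.{u}) (p : X ⟶ E) :
    Phi A B E iso X (Psi A B E iso X p) = p :=
  (Phi A B E iso X).apply_symm_apply p

lemma Psi_nat {X Y : SemicatObj.{u}} (h : X ⟶ Y) (p : Y ⟶ E) :
    Psi A B E iso X (h ≫ p) = (prodWith A).map h ≫ Psi A B E iso Y p := by
  apply (Phi A B E iso X).injective
  rw [Phi_nat]
  simp [Psi]


/-- the semifunctor from the walking object picking out `e` -/
def ptF (e : E.α) : chain.{u} 1 ⟶ E where
  obj _ := e
  map f := chain1_elim f
  map_comp f _ := chain1_elim f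

/-- the semifunctor `1 × A ⟶ B` corresponding to `u : Ob A → Ob B` -/
def GuF (u : A.α → B.α) : (prodWith A).obj (chain.{u} 1) ⟶ B where
  obj p := u p.2
  map f := chain1_elim f.1
  map_comp f _ := chain1_elim f.1

instance : Subsingleton (chain.{u} 1).α := inferInstanceAs (Subsingleton (ULift (Fin 1)))

lemma chain1E_ext {P Q : chain.{u} 1 ⟶ E} (h : P.obj ⟨0⟩ = Q.obj ⟨0⟩) : P = Q :=
  sfext (funext fun x => by rw [Subsingleton.elim x (⟨0⟩ : (chain.{u} 1).α)]; exact h)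
    (fun _ _ f => chain1_elim f)

lemma chain1B_ext {P Q : (prodWith A).obj (chain.{u} 1) ⟶ B}
    (h : ∀ a, P.obj (⟨0⟩, a) = Q.obj (⟨0⟩, a)) : P = Q :=
  sfext (funext fun p => by
      rw [show p = (⟨0⟩, p.2) from Prod.ext (Subsingleton.elim _ _) rfl]; exact h p.2)
    (fun _ _ f => chain1_elim f.1)

/-- Part (i): objects of `E` are functions `Ob A → Ob B`. -/
def obe : E.α ≃ (A.α → B.α) where
  toFun e a := (Psi A B E iso (chain 1) (ptF E e)).obj (⟨0⟩, a)
  invFun u := (Phi A B E iso (chain 1) (GuF A B u)).obj ⟨0⟩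
  left_inv e := by
    have h1 : GuF A B (fun a => (Psi A B E iso (chain 1) (ptF E e)).obj (⟨0⟩, a)) =
        Psi A B E iso (chain 1) (ptF E e) := chain1B_ext A B (fun a => rfl)
    show (Phi A B E iso (chain 1) _).obj ⟨0⟩ = e
    rw [h1]
    rw [show Phi A B E iso (chain 1) (Psi A B E iso (chain 1) (ptF E e)) = ptF E e from
      (Phi A B E iso (chain 1)).apply_symm_apply _]
    rfl
  right_inv u := by
    funext a
    have h1 : ptF E ((Phi A B E iso (chain 1) (GuF A B u)).obj ⟨0⟩) =
        Phi A B E iso (chain 1) (GuF A B u) := chain1E_ext E rfl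
    show (Psi A B E iso (chain 1) (ptF E _)).obj (⟨0⟩, a) = u a
    rw [h1]
    rw [show Psi A B E iso (chain 1) (Phi A B E iso (chain 1) (GuF A B u)) = GuF A B u from
      (Phi A B E iso (chain 1)).symm_apply_apply _]
    rfl

lemma obj_coh {n : ℕ} (P : chain.{u} n ⟶ E) (x : (chain.{u} n).α) (a : A.α) :
    (Psi A B E iso (chain n) P).obj (x, a) = obe A B E iso (P.obj x) a := by
  have h1 : ptF E (P.obj x) =
      chainMap (fun _ => x.down) (fun {i j} h => absurd (Subsingleton.elim i j) (ne_of_lt h)) ≫ P :=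
    chain1E_ext E rfl
  show _ = (Psi A B E iso (chain 1) (ptF E (P.obj x))).obj (⟨0⟩, a)
  rw [h1, Psi_nat]
  rfl


/-! ### part (ii): morphisms -/

lemma chain2_src {X Y : (chain.{u} 2).α} (f : X ⟶ Y) : X.down.val = 0 := by
  have h := chain_lt f; have := X.down.isLt; have := Y.down.isLt; omega

lemma chain2_tgt {X Y : (chain.{u} 2).α} (f : X ⟶ Y) : Y.down.val = 1 := by
  have h := chain_lt f; have := X.down.isLt; have := Y.down.isLt; omega

def chain2_nocomp {X Y Z : (chain.{u} 2).α} (f : X ⟶ Y) (g : Y ⟶ Z) {C : Sort*} : C :=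
  absurd (chain2_src g) (by simp [chain2_tgt f])

def f01 : (⟨0⟩ : (chain.{u} 2).α) ⟶ ⟨1⟩ := ⟨⟨by decide⟩⟩

def arrObj (F₁ F₂ : E.α) : (chain.{u} 2).α → E.α :=
  fun x => if x.down.val = 0 then F₁ else F₂

lemma arrObj_src {F₁ F₂ : E.α} {x : (chain.{u} 2).α} (h : x.down.val = 0) :
    arrObj E F₁ F₂ x = F₁ := if_pos h

lemma arrObj_tgt {F₁ F₂ : E.α} {x : (chain.{u} 2).α} (h : x.down.val = 1) :
    arrObj E F₁ F₂ x = F₂ := if_neg (by omega)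

/-- the semifunctor `2 ⟶ E` picking out `α` -/
def arrF {F₁ F₂ : E.α} (α : F₁ ⟶ F₂) : chain.{u} 2 ⟶ E where
  obj := arrObj E F₁ F₂
  map {X Y} f := qcast (arrObj_src E (chain2_src f)).symm (arrObj_tgt E (chain2_tgt f)).symm α
  map_comp f g := chain2_nocomp f g

def homFun {F₁ F₂ : E.α} (α : F₁ ⟶ F₂) (a₁ a₂ : A.α) (f : a₁ ⟶ a₂) :
    obe A B E iso F₁ a₁ ⟶ obe A B E iso F₂ a₂ :=
  qcast (obj_coh A B E iso (arrF E α) ⟨0⟩ a₁) (obj_coh A B E iso (arrF E α) ⟨1⟩ a₂)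
    ((Psi A B E iso (chain 2) (arrF E α)).map (f01, f))

/-- the semifunctor `2 × A ⟶ B` encoding the data `m` -/
def Gm {F₁ F₂ : E.α}
    (m : ∀ a₁ a₂ : A.α, (a₁ ⟶ a₂) → (obe A B E iso F₁ a₁ ⟶ obe A B E iso F₂ a₂)) :
    (prodWith A).obj (chain.{u} 2) ⟶ B where
  obj p := obe A B E iso (arrObj E F₁ F₂ p.1) p.2
  map {X Y} fp :=
    qcast (congrArg (fun t => obe A B E iso t X.2) (arrObj_src E (chain2_src fp.1)).symm)
      (congrArg (fun t => obe A B E iso t Y.2) (arrObj_tgt E (chain2_tgt fp.1)).symm)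
      (m X.2 Y.2 fp.2)
  map_comp fp gp := chain2_nocomp fp.1 gp.1

lemma Gm_obj0 {F₁ F₂ : E.α}
    (m : ∀ a₁ a₂ : A.α, (a₁ ⟶ a₂) → (obe A B E iso F₁ a₁ ⟶ obe A B E iso F₂ a₂)) :
    (Phi A B E iso (chain 2) (Gm A B E iso m)).obj ⟨0⟩ = F₁ := by
  apply (obe A B E iso).injective
  funext a
  rw [← obj_coh A B E iso (Phi A B E iso (chain 2) (Gm A B E iso m)) ⟨0⟩ a, Psi_Phi]
  rfl

lemma Gm_obj1 {F₁ F₂ : E.α}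
    (m : ∀ a₁ a₂ : A.α, (a₁ ⟶ a₂) → (obe A B E iso F₁ a₁ ⟶ obe A B E iso F₂ a₂)) :
    (Phi A B E iso (chain 2) (Gm A B E iso m)).obj ⟨1⟩ = F₂ := by
  apply (obe A B E iso).injective
  funext a
  rw [← obj_coh A B E iso (Phi A B E iso (chain 2) (Gm A B E iso m)) ⟨1⟩ a, Psi_Phi]
  rfl

def homInv {F₁ F₂ : E.α}
    (m : ∀ a₁ a₂ : A.α, (a₁ ⟶ a₂) → (obe A B E iso F₁ a₁ ⟶ obe A B E iso F₂ a₂)) :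
    F₁ ⟶ F₂ :=
  qcast (Gm_obj0 A B E iso m) (Gm_obj1 A B E iso m)
    ((Phi A B E iso (chain 2) (Gm A B E iso m)).map f01)


lemma Gm_homFun {F₁ F₂ : E.α} (α : F₁ ⟶ F₂) :
    Gm A B E iso (homFun A B E iso α) = Psi A B E iso (chain 2) (arrF E α) := by
  apply sfext
  · funext p
    exact (obj_coh A B E iso (arrF E α) p.1 p.2).symm
  · intro X Y fp
    obtain ⟨x1, a1⟩ := X
    obtain ⟨y1, a2⟩ := Y
    have hx : x1 = ⟨0⟩ := ULift.ext _ _ (Fin.ext (chain2_src fp.1))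
    have hy : y1 = ⟨1⟩ := ULift.ext _ _ (Fin.ext (chain2_tgt fp.1))
    subst hx; subst hy
    have hfp : fp = (f01, fp.2) := Prod.ext (Subsingleton.elim _ _) rfl
    rw [hfp]
    exact (qcast_heq _ _ _).trans HEq.rfl

lemma hom_left {F₁ F₂ : E.α} (α : F₁ ⟶ F₂) : homInv A B E iso (homFun A B E iso α) = α := by
  rw [homInv, qcast_eq_iff]
  have h : Phi A B E iso (chain 2) (Gm A B E iso (homFun A B E iso α)) = arrF E α := by
    rw [Gm_homFun, Phi_Psi]
  exact (map_heq h f01).trans HEq.rfl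

lemma arrF_homInv {F₁ F₂ : E.α}
    (m : ∀ a₁ a₂ : A.α, (a₁ ⟶ a₂) → (obe A B E iso F₁ a₁ ⟶ obe A B E iso F₂ a₂)) :
    arrF E (homInv A B E iso m) = Phi A B E iso (chain 2) (Gm A B E iso m) := by
  apply sfext
  · funext x
    have : x.down.val = 0 ∨ x.down.val = 1 := by have := x.down.isLt; omega
    rcases this with h | h
    · have hx : x = ⟨0⟩ := ULift.ext _ _ (Fin.ext h)
      rw [hx]
      exact (arrObj_src E (F₁ := F₁) (F₂ := F₂) (x := ⟨0⟩) rfl).trans (Gm_obj0 A B E iso m).symm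
    · have hx : x = ⟨1⟩ := ULift.ext _ _ (Fin.ext h)
      rw [hx]
      exact (arrObj_tgt E (F₁ := F₁) (F₂ := F₂) (x := ⟨1⟩) rfl).trans (Gm_obj1 A B E iso m).symm
  · intro X Y fp
    have hx : X = ⟨0⟩ := ULift.ext _ _ (Fin.ext (chain2_src fp))
    have hy : Y = ⟨1⟩ := ULift.ext _ _ (Fin.ext (chain2_tgt fp))
    subst hx; subst hy
    have hfp : fp = f01 := Subsingleton.elim _ _
    rw [hfp]
    exact qcast_heq _ _ _

lemma hom_right {F₁ F₂ : E.α}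
    (m : ∀ a₁ a₂ : A.α, (a₁ ⟶ a₂) → (obe A B E iso F₁ a₁ ⟶ obe A B E iso F₂ a₂))
    (a₁ a₂ : A.α) (f : a₁ ⟶ a₂) :
    homFun A B E iso (homInv A B E iso m) a₁ a₂ f = m a₁ a₂ f := by
  unfold homFun
  refine (qcast_eq_iff _ _ _ _).mpr ?_
  have h : Psi A B E iso (chain 2) (arrF E (homInv A B E iso m)) = Gm A B E iso m := by
    rw [arrF_homInv, Psi_Phi]
  exact (map_heq (X := (⟨0⟩, a₁)) (Y := (⟨1⟩, a₂)) h (f01, f)).trans HEq.rfl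

/-- Part (ii): morphisms `F₁ ⟶ F₂` of `E` are families `α_f : F₁ a₁ ⟶ F₂ a₂`. -/
def home (F₁ F₂ : E.α) : (F₁ ⟶ F₂) ≃
    (∀ a₁ a₂ : A.α, (a₁ ⟶ a₂) → (obe A B E iso F₁ a₁ ⟶ obe A B E iso F₂ a₂)) where
  toFun := homFun A B E iso
  invFun := homInv A B E iso
  left_inv := hom_left A B E iso
  right_inv m := by funext a₁ a₂ f; exact hom_right A B E iso m a₁ a₂ f


/-! ### edge coherence -/

/-- the edge semifunctor `2 ⟶ n` along a hom `e : x ⟶ y` -/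
def edgeF {n : ℕ} {x y : (chain.{u} n).α} (e : x ⟶ y) : chain.{u} 2 ⟶ chain.{u} n :=
  chainMap (fun i => if i.val = 0 then x.down else y.down)
    (fun {i j} h => by
      have h1 : i.val = 0 := by have := i.isLt; have := j.isLt; omega
      have h2 : j.val = 1 := by have := i.isLt; have := j.isLt; omega
      simp only [h1, h2, if_pos, if_neg, one_ne_zero]
      exact e.down.down)

lemma arrF_edge {n : ℕ} (P : chain.{u} n ⟶ E) {x y : (chain.{u} n).α} (e : x ⟶ y) :
    arrF E (P.map e) = edgeF e ≫ P := by
  apply sfext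
  · funext z
    show arrObj E (P.obj x) (P.obj y) z = P.obj ((edgeF e).obj z)
    dsimp only [arrObj, edgeF, chainMap]
    split <;> rfl
  · intro X Y fp
    have hx : X = ⟨0⟩ := ULift.ext _ _ (Fin.ext (chain2_src fp))
    have hy : Y = ⟨1⟩ := ULift.ext _ _ (Fin.ext (chain2_tgt fp))
    subst hx; subst hy
    have h2 : (edgeF e ≫ P).map fp = P.map e :=
      congrArg P.map (Subsingleton.elim _ _)
    exact (heq_of_eq h2.symm : HEq (P.map e) _)

lemma edge_coh {n : ℕ} (P : chain.{u} n ⟶ E) {x y : (chain.{u} n).α} (e : x ⟶ y)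
    (a₁ a₂ : A.α) (f : a₁ ⟶ a₂) :
    homFun A B E iso (P.map e) a₁ a₂ f =
      qcast (obj_coh A B E iso P x a₁) (obj_coh A B E iso P y a₂)
        ((Psi A B E iso (chain n) P).map (e, f)) := by
  unfold homFun
  refine (qcast_eq_iff _ _ _ _).mpr ?_
  have h : Psi A B E iso (chain 2) (arrF E (P.map e)) =
      (prodWith A).map (edgeF e) ≫ Psi A B E iso (chain n) P := by
    rw [arrF_edge, Psi_nat]
  have h2 : ((prodWith A).map (edgeF e) ≫ Psi A B E iso (chain n) P).map
      ((f01, f) : ((⟨0⟩, a₁) : ((chain.{u} 2).α × A.α)) ⟶ (⟨1⟩, a₂)) =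
      (Psi A B E iso (chain n) P).map (e, f) :=
    congrArg (fun t => (Psi A B E iso (chain n) P).map t)
      (Prod.ext (Subsingleton.elim _ _) rfl)
  exact ((map_heq (X := (⟨0⟩, a₁)) (Y := (⟨1⟩, a₂)) h (f01, f)).trans
    (heq_of_eq h2)).trans (qcast_heq _ _ _).symm


/-! ### part (iii): composition -/

def ob3 (F₁ F₂ F₃ : E.α) : (chain.{u} 3).α → E.α :=
  fun z => if z.down.val = 0 then F₁ else if z.down.val = 1 then F₂ else F₃

lemma ob3_eq0 {F₁ F₂ F₃ : E.α} {z : (chain.{u} 3).α} (h : z.down.val = 0) :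
    ob3 E F₁ F₂ F₃ z = F₁ := by simp [ob3, h]

lemma ob3_eq1 {F₁ F₂ F₃ : E.α} {z : (chain.{u} 3).α} (h : z.down.val = 1) :
    ob3 E F₁ F₂ F₃ z = F₂ := by simp [ob3, h]

lemma ob3_eq2 {F₁ F₂ F₃ : E.α} {z : (chain.{u} 3).α} (h : z.down.val = 2) :
    ob3 E F₁ F₂ F₃ z = F₃ := by simp [ob3, h]

def h01 : (⟨0⟩ : (chain.{u} 3).α) ⟶ ⟨1⟩ := ⟨⟨by decide⟩⟩
def h12 : (⟨1⟩ : (chain.{u} 3).α) ⟶ ⟨2⟩ := ⟨⟨by decide⟩⟩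
def h02 : (⟨0⟩ : (chain.{u} 3).α) ⟶ ⟨2⟩ := ⟨⟨by decide⟩⟩

lemma tri1 {X Y : (chain.{u} 3).α} (f : X ⟶ Y) (hy : Y.down.val = 1) : X.down.val = 0 := by
  have := chain_lt f; omega

lemma tri2 {X Y : (chain.{u} 3).α} (f : X ⟶ Y) (hy : ¬ Y.down.val = 1) : Y.down.val = 2 := by
  have := chain_lt f; have := Y.down.isLt; omega

lemma tri3 {X Y : (chain.{u} 3).α} (f : X ⟶ Y) (hy : ¬ Y.down.val = 1)
    (hx : ¬ X.down.val = 0) : X.down.val = 1 := by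
  have := chain_lt f; have := Y.down.isLt; omega

/-- the semifunctor `3 ⟶ E` encoding a commutative triangle -/
def triF {F₁ F₂ F₃ : E.α} (α : F₁ ⟶ F₂) (β : F₂ ⟶ F₃) (γ : F₁ ⟶ F₃)
    (hγ : γ = Semicategory.comp α β) : chain.{u} 3 ⟶ E where
  obj := ob3 E F₁ F₂ F₃
  map {X Y} f :=
    if hy : Y.down.val = 1 then
      qcast (ob3_eq0 E (tri1 f hy)).symm (ob3_eq1 E hy).symm α
    else if hx : X.down.val = 0 then
      qcast (ob3_eq0 E hx).symm (ob3_eq2 E (tri2 f hy)).symm γ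
    else
      qcast (ob3_eq1 E (tri3 f hy hx)).symm (ob3_eq2 E (tri2 f hy)).symm β
  map_comp {X Y Z} f g := by
    have hX : X.down.val = 0 := by
      have := chain_lt f; have := chain_lt g; have := Z.down.isLt; omega
    have hY : Y.down.val = 1 := by
      have := chain_lt f; have := chain_lt g; have := Z.down.isLt; omega
    have hZ : Z.down.val = 2 := by
      have := chain_lt f; have := chain_lt g; have := Z.down.isLt; omega
    rw [dif_neg (by omega), dif_pos hX, dif_pos hY, dif_neg (by omega), dif_neg (by omega)]
    rw [qcast_comp, hγ]

lemma part3_forward {F₁ F₂ F₃ : E.α} (α : F₁ ⟶ F₂) (β : F₂ ⟶ F₃) (γ : F₁ ⟶ F₃)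
    (hγ : γ = Semicategory.comp α β) (a₁ a₂ a₃ : A.α) (f : a₁ ⟶ a₂) (g : a₂ ⟶ a₃) :
    homFun A B E iso γ a₁ a₃ (Semicategory.comp f g) =
      Semicategory.comp (homFun A B E iso α a₁ a₂ f) (homFun A B E iso β a₂ a₃ g) := by
  set P := triF E α β γ hγ with hP
  show homFun A B E iso (P.map h02) a₁ a₃ (Semicategory.comp f g) =
    Semicategory.comp (homFun A B E iso (P.map h01) a₁ a₂ f)
      (homFun A B E iso (P.map h12) a₂ a₃ g)
  rw [edge_coh, edge_coh, edge_coh, qcast_comp]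
  congr 1
  exact ((Psi A B E iso (chain 3) P).map_comp (X := (⟨0⟩, a₁)) (Y := (⟨1⟩, a₂))
    (Z := (⟨2⟩, a₃)) (h01, f) (h12, g))

lemma homFun_qcast {F₁ F₂ F₁' F₂' : E.α} (h : F₁' = F₁) (h' : F₂' = F₂) (δ : F₁' ⟶ F₂')
    (a₁ a₂ : A.α) (f : a₁ ⟶ a₂) :
    homFun A B E iso (qcast h h' δ) a₁ a₂ f =
      qcast (congrArg (fun t => obe A B E iso t a₁) h)
        (congrArg (fun t => obe A B E iso t a₂) h')
        (homFun A B E iso δ a₁ a₂ f) := by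
  subst h; subst h'; rfl

/-- the semifunctor `3 × A ⟶ B` built from three compatible families -/
def G3 {F₁ F₂ F₃ : E.α}
    (mα : ∀ a₁ a₂ : A.α, (a₁ ⟶ a₂) → (obe A B E iso F₁ a₁ ⟶ obe A B E iso F₂ a₂))
    (mβ : ∀ a₁ a₂ : A.α, (a₁ ⟶ a₂) → (obe A B E iso F₂ a₁ ⟶ obe A B E iso F₃ a₂))
    (mγ : ∀ a₁ a₂ : A.α, (a₁ ⟶ a₂) → (obe A B E iso F₁ a₁ ⟶ obe A B E iso F₃ a₂))
    (hc : ∀ (a₁ a₂ a₃ : A.α) (f : a₁ ⟶ a₂) (g : a₂ ⟶ a₃),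
      mγ a₁ a₃ (Semicategory.comp f g) = Semicategory.comp (mα a₁ a₂ f) (mβ a₂ a₃ g)) :
    (prodWith A).obj (chain.{u} 3) ⟶ B where
  obj p := obe A B E iso (ob3 E F₁ F₂ F₃ p.1) p.2
  map {X Y} fp :=
    if hy : Y.1.down.val = 1 then
      qcast (congrArg (fun t => obe A B E iso t X.2) (ob3_eq0 E (tri1 fp.1 hy)).symm)
        (congrArg (fun t => obe A B E iso t Y.2) (ob3_eq1 E hy).symm)
        (mα X.2 Y.2 fp.2)
    else if hx : X.1.down.val = 0 then
      qcast (congrArg (fun t => obe A B E iso t X.2) (ob3_eq0 E hx).symm)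
        (congrArg (fun t => obe A B E iso t Y.2) (ob3_eq2 E (tri2 fp.1 hy)).symm)
        (mγ X.2 Y.2 fp.2)
    else
      qcast (congrArg (fun t => obe A B E iso t X.2) (ob3_eq1 E (tri3 fp.1 hy hx)).symm)
        (congrArg (fun t => obe A B E iso t Y.2) (ob3_eq2 E (tri2 fp.1 hy)).symm)
        (mβ X.2 Y.2 fp.2)
  map_comp {X Y Z} fp gp := by
    have hX : X.1.down.val = 0 := by
      have := chain_lt fp.1; have := chain_lt gp.1; have := Z.1.down.isLt; omega
    have hY : Y.1.down.val = 1 := by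
      have := chain_lt fp.1; have := chain_lt gp.1; have := Z.1.down.isLt; omega
    have hZ : Z.1.down.val = 2 := by
      have := chain_lt fp.1; have := chain_lt gp.1; have := Z.1.down.isLt; omega
    dsimp only
    rw [dif_neg (by omega), dif_pos hX, dif_pos hY, dif_neg (by omega), dif_neg (by omega)]
    rw [qcast_comp, ← hc X.2 Y.2 Z.2 fp.2 gp.2]
    rfl

lemma part3_reverse {F₁ F₂ F₃ : E.α} (α : F₁ ⟶ F₂) (β : F₂ ⟶ F₃) (γ : F₁ ⟶ F₃)
    (hc : ∀ (a₁ a₂ a₃ : A.α) (f : a₁ ⟶ a₂) (g : a₂ ⟶ a₃),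
      homFun A B E iso γ a₁ a₃ (Semicategory.comp f g) =
        Semicategory.comp (homFun A B E iso α a₁ a₂ f) (homFun A B E iso β a₂ a₃ g)) :
    γ = Semicategory.comp α β := by
  set G := G3 A B E iso (homFun A B E iso α) (homFun A B E iso β) (homFun A B E iso γ) hc
    with hG
  set Q := Phi A B E iso (chain 3) G with hQdef
  have hPsiQ : Psi A B E iso (chain 3) Q = G := Psi_Phi A B E iso _ _
  have hQ0 : Q.obj ⟨0⟩ = F₁ := (obe A B E iso).injective (funext fun a => by
    rw [← obj_coh A B E iso Q ⟨0⟩ a, hPsiQ]; rfl)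
  have hQ1 : Q.obj ⟨1⟩ = F₂ := (obe A B E iso).injective (funext fun a => by
    rw [← obj_coh A B E iso Q ⟨1⟩ a, hPsiQ]; rfl)
  have hQ2 : Q.obj ⟨2⟩ = F₃ := (obe A B E iso).injective (funext fun a => by
    rw [← obj_coh A B E iso Q ⟨2⟩ a, hPsiQ]; rfl)
  have hα : qcast hQ0 hQ1 (Q.map h01) = α := by
    apply (home A B E iso F₁ F₂).injective
    funext a₁ a₂ f
    show homFun A B E iso (qcast hQ0 hQ1 (Q.map h01)) a₁ a₂ f = homFun A B E iso α a₁ a₂ f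
    rw [homFun_qcast, edge_coh, qcast_qcast, qcast_eq_iff]
    exact (map_heq (X := ((⟨0⟩ : (chain.{u} 3).α), a₁)) (Y := (⟨1⟩, a₂)) hPsiQ
      (h01, f)).trans HEq.rfl
  have hβ : qcast hQ1 hQ2 (Q.map h12) = β := by
    apply (home A B E iso F₂ F₃).injective
    funext a₁ a₂ f
    show homFun A B E iso (qcast hQ1 hQ2 (Q.map h12)) a₁ a₂ f = homFun A B E iso β a₁ a₂ f
    rw [homFun_qcast, edge_coh, qcast_qcast, qcast_eq_iff]
    exact (map_heq (X := ((⟨1⟩ : (chain.{u} 3).α), a₁)) (Y := (⟨2⟩, a₂)) hPsiQ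
      (h12, f)).trans HEq.rfl
  have hγ : qcast hQ0 hQ2 (Q.map h02) = γ := by
    apply (home A B E iso F₁ F₃).injective
    funext a₁ a₂ f
    show homFun A B E iso (qcast hQ0 hQ2 (Q.map h02)) a₁ a₂ f = homFun A B E iso γ a₁ a₂ f
    rw [homFun_qcast, edge_coh, qcast_qcast, qcast_eq_iff]
    exact (map_heq (X := ((⟨0⟩ : (chain.{u} 3).α), a₁)) (Y := (⟨2⟩, a₂)) hPsiQ
      (h02, f)).trans HEq.rfl
  rw [← hα, ← hβ, ← hγ, qcast_comp, ← Q.map_comp h01 h12]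
  rfl

end

end Prop38

/-- Proposition 3.8: if the exponential `E = B^A` of semicategories exists, witnessed by
bijections `Hom(X × A, B) ≅ Hom(X, E)` natural in `X`, then the objects of `E` are (in
bijection with) the functions `Ob(A) → Ob(B)`, the morphisms `F₁ ⟶ F₂` of `E` are the
dependent functions assigning to every `f : a₁ ⟶ a₂` in `A` a morphism
`F₁ a₁ ⟶ F₂ a₂` in `B`, and under these bijections `γ = α ≫ β` holds iff
`γ_{f ≫ g} = α_f ≫ β_g` for every composable pair `f, g` in `A`. -/
theorem exponential_semicategory_structure (A B E : SemicatObj.{u})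
    (iso : (prodWith A).op ⋙ yoneda.obj B ≅ yoneda.obj E) :
    ∃ (obe : E.α ≃ (A.α → B.α))
      (home : ∀ F₁ F₂ : E.α, (F₁ ⟶ F₂) ≃
        (∀ (a₁ a₂ : A.α), (a₁ ⟶ a₂) → (obe F₁ a₁ ⟶ obe F₂ a₂))),
      ∀ (F₁ F₂ F₃ : E.α) (α : F₁ ⟶ F₂) (β : F₂ ⟶ F₃) (γ : F₁ ⟶ F₃),
        γ = Semicategory.comp α β ↔
          ∀ (a₁ a₂ a₃ : A.α) (f : a₁ ⟶ a₂) (g : a₂ ⟶ a₃),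
            home F₁ F₃ γ a₁ a₃ (Semicategory.comp f g) =
              Semicategory.comp (home F₁ F₂ α a₁ a₂ f) (home F₂ F₃ β a₂ a₃ g) := by
  refine ⟨Prop38.obe A B E iso, Prop38.home A B E iso, fun F₁ F₂ F₃ α β γ => ?_⟩
  constructor
  · intro hγ a₁ a₂ a₃ f g
    exact Prop38.part3_forward A B E iso α β γ hγ a₁ a₂ a₃ f g
  · intro hc
    exact Prop38.part3_reverse A B E iso α β γ hc
end
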